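/- arXiv:2006.06724 — 4 statements merged into one kernel-verified Lean document; each statement's English description precedes it below -/
import Mathlib

section
/- (Joyal bijection) For every positive integer n there exists a bijection J from the set of all functions f : {1,…,n} → {1,…,n} to the set of doubly rooted trees on n vertices such that for every such f, the symmetric difference of the undirected edge multiset E(f) of the functional graph of f and the edge set of the tree J(f) has size at most 2·|M(f)| − 1, where M(f) is the core of f. -/
open scoped Classical

/-- The core of a self-map: the set of points lying on a cycle,
i.e. `x` with `f^[j] x = x` for some `j ≥ 1`. -/
def inCore {V : Type*} (f : V → V) (x : V) : Prop := ∃ j ≥ 1, f^[j] x = x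

/-- The undirected edge multiset of the functional graph of `f` : the multiset of
unordered pairs `{x, f x}`, with multiplicity, loops allowed. -/
def funEdges {n : ℕ} (f : Fin n → Fin n) : Multiset (Sym2 (Fin n)) :=
  Finset.univ.val.map (fun x => s(x, f x))

/-- The edge multiset of a simple graph on `Fin n` (each edge counted once). -/
noncomputable def graphEdges {n : ℕ} (G : SimpleGraph (Fin n)) : Multiset (Sym2 (Fin n)) :=
  (G.edgeSet.toFinite.toFinset).val

/-- Size of the multiset symmetric difference `(A - B) + (B - A)`. -/
noncomputable def msdCard {α : Type*} (A B : Multiset α) : ℕ :=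
  Multiset.card ((A - B) + (B - A))

/-- A doubly rooted tree on `n` vertices: a tree on vertex set `Fin n`
together with an ordered pair of roots. -/
structure DoublyRootedTree (n : ℕ) where
  tree : SimpleGraph (Fin n)
  isTree : tree.IsTree
  r1 : Fin n
  r2 : Fin n

/-!
On its core `C`, `f` is a permutation. Write it in two-line notation with `C` in increasing order
as the top row and read the bottom row `b₀, …, b_{k-1}` as a path. Keeping the edges `x — f x` for
`x ∉ C`, whose forward orbits all run into `C`, gives a tree doubly rooted at `b₀` and `b_{k-1}`,
whose parent map towards `b_{k-1}` agrees with `f` off `C`. Conversely, the path between the two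
roots of a tree, sorted, gives back the top row and hence `f`. Only the edges at `C` change: the
`k` edges `{x, f x}` with `x ∈ C` are traded for the `k - 1` edges of the path.
-/

namespace Joyal

open Function Finset

section Dynamics

variable {V : Type*} {f g : V → V} {S : Set V} {x : V}

theorem exists_iterate_mem_periodicPts [Finite V] (f : V → V) (x : V) :
    ∃ m, f^[m] x ∈ periodicPts f := by
  obtain ⟨a, b, hne, hab⟩ := Finite.exists_ne_map_eq_of_infinite fun m : ℕ => f^[m] x
  wlog hlt : a < b generalizing a b
  · exact this b a hne.symm hab.symm (hne.lt_or_gt.resolve_left hlt)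
  refine ⟨a, mk_mem_periodicPts (Nat.sub_pos_of_lt hlt) ?_⟩
  show f^[b - a] (f^[a] x) = f^[a] x
  rw [← iterate_add_apply, Nat.sub_add_cancel hlt.le]
  exact hab.symm

theorem exists_iterate_mem_of_eqOn_compl (hfg : ∀ y ∉ S, g y = f y) {m : ℕ}
    (hm : f^[m] x ∈ S) : ∃ m', g^[m'] x ∈ S := by
  induction m generalizing x with
  | zero => exact ⟨0, hm⟩
  | succ m ih =>
    by_cases hx : x ∈ S
    · exact ⟨0, hx⟩
    · obtain ⟨m', hm'⟩ := ih (x := f x) hm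
      exact ⟨m' + 1, by rwa [iterate_succ_apply, hfg x hx]⟩

theorem mem_of_mem_periodicPts_of_iterate_mem (hS : Set.MapsTo f S S) (hx : x ∈ periodicPts f)
    {m : ℕ} (hm : f^[m] x ∈ S) : x ∈ S := by
  obtain ⟨j, hj, hper⟩ := mem_periodicPts.1 hx
  have hret : f^[j * m - m] (f^[m] x) = x := by
    rw [← iterate_add_apply, Nat.sub_add_cancel (Nat.le_mul_of_pos_left m hj)]
    exact (hper.mul_const m).eq
  exact hret ▸ hS.iterate _ hm

theorem subset_periodicPts_of_injOn [Finite S] (hS : Set.MapsTo f S S) (hinj : Set.InjOn f S) :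
    S ⊆ periodicPts f := fun x hx =>
  Semiconj.mapsTo_periodicPts (g := Subtype.val) (fun _ => rfl)
    ((hS.restrict_inj.2 hinj).mem_periodicPts ⟨x, hx⟩)

theorem periodicPts_eq_of_injOn [Finite V] (hS : Set.MapsTo f S S) (hinj : Set.InjOn f S)
    (henter : ∀ x, ∃ m, f^[m] x ∈ S) : periodicPts f = S :=
  Set.Subset.antisymm
    (fun x hx => (henter x).elim fun _ hm => mem_of_mem_periodicPts_of_iterate_mem hS hx hm)
    (subset_periodicPts_of_injOn hS hinj)

end Dynamics

section Core

variable {V : Type*} [Fintype V] {f : V → V} {x : V}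

noncomputable def core (f : V → V) : Finset V := (periodicPts f).toFinset

theorem mem_core : x ∈ core f ↔ x ∈ periodicPts f := Set.mem_toFinset

theorem ncard_setOf_inCore (f : V → V) : {x | inCore f x}.ncard = #(core f) := by
  rw [core, ← Set.ncard_eq_toFinset_card']
  rfl

theorem card_core_pos [Nonempty V] (f : V → V) : 0 < #(core f) :=
  let ⟨_, hm⟩ := exists_iterate_mem_periodicPts f (Classical.arbitrary V)
  card_pos.2 ⟨_, mem_core.2 hm⟩

end Core

section ParentMap

open SimpleGraph

variable {V : Type*} {p : V → V} {r x y : V}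

def IsParentMap (p : V → V) (r : V) : Prop := p r = r ∧ ∀ x, ∃ m, p^[m] x = r

noncomputable def depth (p : V → V) (r x : V) : ℕ := sInf {m | p^[m] x = r}

def graphOf (p : V → V) : SimpleGraph V := fromRel fun x y => p x = y

theorem graphOf_adj : (graphOf p).Adj x y ↔ x ≠ y ∧ (p x = y ∨ p y = x) := fromRel_adj ..

theorem depth_self : depth p r r = 0 := Nat.sInf_eq_zero.2 (Or.inl rfl)

namespace IsParentMap

theorem iterate_depth (h : IsParentMap p r) (x : V) : p^[depth p r x] x = r :=
  Nat.sInf_mem (h.2 x)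

theorem depth_eq_zero_iff (h : IsParentMap p r) : depth p r x = 0 ↔ x = r :=
  ⟨fun h0 => by simpa [h0] using h.iterate_depth x, fun hx => hx ▸ depth_self⟩

theorem depth_apply (h : IsParentMap p r) (hx : x ≠ r) :
    depth p r x = depth p r (p x) + 1 := by
  have hpos : 0 < depth p r x := Nat.pos_of_ne_zero (h.depth_eq_zero_iff.not.2 hx)
  have hle : depth p r (p x) ≤ depth p r x - 1 := Nat.sInf_le <| by
    show p^[depth p r x - 1] (p x) = r
    rw [← iterate_succ_apply, Nat.succ_eq_add_one, Nat.sub_add_cancel hpos]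
    exact h.iterate_depth x
  have hge : depth p r x ≤ depth p r (p x) + 1 := Nat.sInf_le (h.iterate_depth (p x))
  omega

theorem apply_ne_self (h : IsParentMap p r) (hx : x ≠ r) : p x ≠ x := fun hfix => by
  have := h.depth_apply hx
  rw [hfix] at this
  omega

theorem depth_iterate (h : IsParentMap p r) {i : ℕ} (hi : i ≤ depth p r x) :
    depth p r (p^[i] x) = depth p r x - i := by
  induction i with
  | zero => rfl
  | succ i ih =>
    have hd := ih (by omega)
    have hne : p^[i] x ≠ r := fun he => by rw [he, depth_self] at hd; omega
    rw [iterate_succ_apply']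
    have := h.depth_apply hne
    omega

theorem injOn_iterate (h : IsParentMap p r) {i j : ℕ} (hi : i ≤ depth p r x)
    (hj : j ≤ depth p r x) (hij : p^[i] x = p^[j] x) : i = j := by
  have := h.depth_iterate hi
  rw [hij, h.depth_iterate hj] at this
  omega

theorem adj_apply (h : IsParentMap p r) (hx : x ≠ r) : (graphOf p).Adj x (p x) :=
  graphOf_adj.2 ⟨(h.apply_ne_self hx).symm, Or.inl rfl⟩

theorem eq_apply_of_adj (h : IsParentMap p r) (hadj : (graphOf p).Adj x y) :
    p x = y ∧ depth p r x = depth p r y + 1 ∨ p y = x ∧ depth p r y = depth p r x + 1 := by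
  obtain ⟨hne, hxy | hyx⟩ := graphOf_adj.1 hadj
  · refine Or.inl ⟨hxy, hxy ▸ h.depth_apply fun hx => hne ?_⟩
    rw [← hxy, hx, h.1]
  · refine Or.inr ⟨hyx, hyx ▸ h.depth_apply fun hy => hne ?_⟩
    rw [← hyx, hy, h.1]

theorem reachable_root (h : IsParentMap p r) (x : V) : (graphOf p).Reachable x r := by
  have step : ∀ y, (graphOf p).Reachable y (p y) := fun y => by
    by_cases hy : y = r
    · rw [hy, h.1]
    · exact (h.adj_apply hy).reachable
  have : ∀ m, (graphOf p).Reachable x (p^[m] x) := fun m => by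
    induction m with
    | zero => rfl
    | succ m ih => exact ih.trans (iterate_succ_apply' p m x ▸ step _)
  exact h.iterate_depth x ▸ this _

theorem connected (h : IsParentMap p r) : (graphOf p).Connected :=
  (connected_iff _).2 ⟨fun x y => (h.reachable_root x).trans (h.reachable_root y).symm, ⟨r⟩⟩

theorem depth_le_depth_add_length (h : IsParentMap p r) (w : (graphOf p).Walk x y) :
    depth p r x ≤ depth p r y + w.length := by
  induction w with
  | nil => simp
  | cons hadj w ih =>
    have := h.eq_apply_of_adj hadj
    simp only [Walk.length_cons]
    omega

theorem dist_eq_depth (h : IsParentMap p r) (x : V) : (graphOf p).dist x r = depth p r x := by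
  refine le_antisymm ?_ ?_
  · generalize hd : depth p r x = d
    induction d generalizing x with
    | zero => simp [h.depth_eq_zero_iff.1 hd]
    | succ d ih =>
      have hx : x ≠ r := fun hx => by rw [hx, depth_self] at hd; omega
      calc (graphOf p).dist x r ≤ (graphOf p).dist x (p x) + (graphOf p).dist (p x) r :=
            h.connected.dist_triangle
        _ ≤ 1 + d := by
          rw [dist_eq_one_iff_adj.2 (h.adj_apply hx)]
          exact Nat.add_le_add_left (ih (p x) (by have := h.depth_apply hx; omega)) 1
        _ = d + 1 := by ring
  · obtain ⟨w, hw⟩ := (h.reachable_root x).exists_walk_length_eq_dist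
    simpa [depth_self, hw] using h.depth_le_depth_add_length w

theorem mem_edgeSet (h : IsParentMap p r) {e : Sym2 V} :
    e ∈ (graphOf p).edgeSet ↔ ∃ x ≠ r, s(x, p x) = e := by
  induction e with
  | h x y =>
    refine ⟨fun hadj => ?_, ?_⟩
    · rcases h.eq_apply_of_adj hadj with ⟨hxy, hd⟩ | ⟨hyx, hd⟩
      · exact ⟨x, fun hx => by rw [hx, depth_self] at hd; omega, by rw [hxy]⟩
      · exact ⟨y, fun hy => by rw [hy, depth_self] at hd; omega, by rw [hyx, Sym2.eq_swap]⟩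
    · rintro ⟨z, hz, he⟩
      exact he ▸ h.adj_apply hz

theorem edge_injOn (h : IsParentMap p r) (hx : x ≠ r) (hy : y ≠ r)
    (hxy : s(x, p x) = s(y, p y)) : x = y := by
  rcases Sym2.eq_iff.1 hxy with ⟨hxy, -⟩ | ⟨hx', hy'⟩
  · exact hxy
  · have hdx := h.depth_apply hx
    have hdy := h.depth_apply hy
    rw [hy'] at hdx
    rw [← hx'] at hdy
    omega

theorem edgeSet_toFinset_val [Fintype V] [DecidableEq V] (h : IsParentMap p r) :
    (graphOf p).edgeSet.toFinite.toFinset.val = (univ.erase r).val.map fun x => s(x, p x) := by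
  refine (Multiset.Nodup.ext (Finset.nodup _) ((univ.erase r).nodup.map_on ?_)).2 fun e => ?_
  · intro x hx y hy
    exact h.edge_injOn (Finset.ne_of_mem_erase hx) (Finset.ne_of_mem_erase hy)
  · simp only [Finset.mem_val, Set.Finite.mem_toFinset, h.mem_edgeSet, Multiset.mem_map,
      mem_erase, mem_univ, and_true]

theorem isTree [Finite V] (h : IsParentMap p r) : (graphOf p).IsTree := by
  classical
  have := Fintype.ofFinite V
  refine isTree_iff_connected_and_card.2 ⟨h.connected, ?_⟩
  rw [Nat.card_coe_set_eq, Set.ncard_eq_toFinset_card _ (Set.toFinite _), Finset.card_def,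
    h.edgeSet_toFinset_val, Multiset.card_map, ← Finset.card_def,
    card_erase_of_mem (mem_univ r), Nat.card_eq_fintype_card, card_univ]
  have : 0 < Fintype.card V := Fintype.card_pos_iff.2 ⟨r⟩
  omega

end IsParentMap

end ParentMap

section ParentMapOfGraph

open SimpleGraph

variable {V : Type*} {T G : SimpleGraph V} {p : V → V} {r x : V}

noncomputable def parentMap (T : SimpleGraph V) (r x : V) : V :=
  if h : ∃ y, T.Adj x y ∧ T.dist y r < T.dist x r then h.choose else x

theorem _root_.SimpleGraph.Connected.exists_adj_dist_lt (hT : T.Connected) (hx : x ≠ r) :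
    ∃ y, T.Adj x y ∧ T.dist y r < T.dist x r := by
  obtain ⟨w, hw⟩ := (hT x r).exists_walk_length_eq_dist
  cases w with
  | nil => exact absurd rfl hx
  | @cons _ y _ hadj w =>
    refine ⟨y, hadj, ?_⟩
    have := dist_le w
    rw [Walk.length_cons] at hw
    omega

theorem parentMap_spec (hT : T.Connected) (hx : x ≠ r) :
    T.Adj x (parentMap T r x) ∧ T.dist (parentMap T r x) r < T.dist x r := by
  rw [parentMap, dif_pos (hT.exists_adj_dist_lt hx)]
  exact (hT.exists_adj_dist_lt hx).choose_spec

theorem parentMap_self : parentMap T r r = r :=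
  dif_neg fun ⟨_, _, hy⟩ => by simp at hy

theorem isParentMap_parentMap (hT : T.Connected) : IsParentMap (parentMap T r) r := by
  refine ⟨parentMap_self, fun x => ?_⟩
  induction hd : T.dist x r using Nat.strong_induction_on generalizing x with
  | _ d ih =>
    by_cases hx : x = r
    · exact ⟨0, hx⟩
    · obtain ⟨m, hm⟩ := ih _ (hd ▸ (parentMap_spec hT hx).2) _ rfl
      exact ⟨m + 1, hm⟩

theorem _root_.SimpleGraph.IsTree.eq_of_le (hT : T.IsTree) (hG : G.Connected) (hle : G ≤ T) :
    G = T := by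
  refine le_antisymm hle fun u v huv => ?_
  by_contra hGuv
  refine isBridge_iff.1 (isAcyclic_iff_forall_adj_isBridge.1 hT.isAcyclic huv) ?_
  refine (hG u v).mono fun a b hab => deleteEdges_adj.2 ⟨hle hab, fun he => hGuv ?_⟩
  rcases Sym2.eq_iff.1 he with ⟨rfl, rfl⟩ | ⟨rfl, rfl⟩
  exacts [hab, hab.symm]

theorem graphOf_parentMap (hT : T.IsTree) : graphOf (parentMap T r) = T := by
  refine hT.eq_of_le (isParentMap_parentMap hT.1).connected fun x y hxy => ?_
  obtain ⟨hne, hxy | hyx⟩ := graphOf_adj.1 hxy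
  · exact hxy ▸ (parentMap_spec hT.1 fun hx => hne (by rw [← hxy, hx, parentMap_self])).1
  · exact hyx ▸ (parentMap_spec hT.1 fun hy => hne (by rw [← hyx, hy, parentMap_self])).1.symm

theorem IsParentMap.parentMap_graphOf (h : IsParentMap p r) : parentMap (graphOf p) r = p := by
  funext x
  by_cases hx : x = r
  · rw [hx, parentMap_self, h.1]
  obtain ⟨hadj, hlt⟩ := parentMap_spec h.connected hx
  rw [h.dist_eq_depth, h.dist_eq_depth] at hlt
  rcases h.eq_apply_of_adj hadj with ⟨hpx, -⟩ | ⟨-, hd⟩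
  · exact hpx.symm
  · omega

end ParentMapOfGraph

section PathMap

variable {V : Type*} {d : ℕ} {b : Fin (d + 1) → V} {g p : V → V} {x : V}

/-- `Fin.clamp` makes the end `b d` of the path a fixed point: the root of the tree. -/
noncomputable def pathMap (b : Fin (d + 1) → V) (g : V → V) : V → V :=
  extend b (fun i => b (Fin.clamp ((i : ℕ) + 1) d)) g

theorem pathMap_apply (hb : Injective b) (i : Fin (d + 1)) :
    pathMap b g (b i) = b (Fin.clamp ((i : ℕ) + 1) d) :=
  hb.extend_apply _ _ _

theorem pathMap_of_notMem (hx : x ∉ Set.range b) : pathMap b g x = g x :=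
  extend_apply' _ _ _ hx

theorem iterate_pathMap (hb : Injective b) (i m : ℕ) :
    (pathMap b g)^[m] (b (Fin.clamp i d)) = b (Fin.clamp (i + m) d) := by
  induction m with
  | zero => rfl
  | succ m ih =>
    rw [iterate_succ_apply', ih, pathMap_apply hb]
    congr 1
    ext
    simp only [Fin.clamp]
    omega

theorem isParentMap_pathMap (hb : Injective b) (henter : ∀ x, ∃ m, g^[m] x ∈ Set.range b) :
    IsParentMap (pathMap b g) (b (Fin.last d)) := by
  have hlast : ∀ m, d ≤ m → b (Fin.clamp m d) = b (Fin.last d) := fun m hm => by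
    congr 1
    ext
    simp [Fin.clamp, hm]
  refine ⟨by rw [pathMap_apply hb, hlast _ (by simp)], fun x => ?_⟩
  obtain ⟨m, ⟨i, hi⟩⟩ := (henter x).elim fun _ hm =>
    exists_iterate_mem_of_eqOn_compl (fun _ hy => pathMap_of_notMem hy) hm
  refine ⟨d + m, ?_⟩
  have hi' : b i = b (Fin.clamp i d) := by
    congr 1
    ext
    simp [Fin.clamp, Nat.le_of_lt_succ i.2]
  rw [iterate_add_apply, ← hi, hi', iterate_pathMap hb, hlast _ (Nat.le_add_left _ _)]

theorem pathMap_eq (hb : Injective b) (hp : ∀ i, p (b i) = b (Fin.clamp ((i : ℕ) + 1) d))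
    (hg : ∀ x ∉ Set.range b, g x = p x) : pathMap b g = p := by
  funext x
  by_cases hx : x ∈ Set.range b
  · obtain ⟨i, rfl⟩ := hx
    rw [pathMap_apply hb, hp]
  · rw [pathMap_of_notMem hx, hg x hx]

end PathMap

section CycleMap

variable {V : Type*} [LinearOrder V] {p f : V → V} {r₁ r₂ x : V}

theorem orderEmbOfFin_congr {s t : Finset V} (hst : s = t) {k l : ℕ} (hs : #s = k) (ht : #t = l)
    {i : Fin k} {j : Fin l} (hij : (i : ℕ) = j) : s.orderEmbOfFin hs i = t.orderEmbOfFin ht j := by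
  subst hst
  simp [orderEmbOfFin_apply, hij]

noncomputable def pathFinset (p : V → V) (r₁ r₂ : V) : Finset V :=
  (range (depth p r₂ r₁ + 1)).image (p^[·] r₁)

/-- Joyal's inverse: the path from `r₁` to `r₂` is the bottom row of a permutation in two-line
notation whose top row is the same vertices sorted; the rest of the tree hangs off its cycles. -/
noncomputable def cycleMap (p : V → V) (r₁ r₂ : V) : V → V :=
  extend ((pathFinset p r₁ r₂).orderEmbOfFin rfl) (fun i => p^[i] r₁) p

theorem mem_pathFinset : x ∈ pathFinset p r₁ r₂ ↔ ∃ i ≤ depth p r₂ r₁, p^[i] r₁ = x := by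
  simp [pathFinset]

theorem IsParentMap.card_pathFinset (h : IsParentMap p r₂) :
    #(pathFinset p r₁ r₂) = depth p r₂ r₁ + 1 := by
  rw [pathFinset, card_image_of_injOn, card_range]
  intro i hi j hj hij
  exact h.injOn_iterate (Nat.lt_succ_iff.1 (mem_range.1 hi)) (Nat.lt_succ_iff.1 (mem_range.1 hj))
    hij

theorem IsParentMap.root_mem_pathFinset (h : IsParentMap p r₂) : r₂ ∈ pathFinset p r₁ r₂ :=
  mem_pathFinset.2 ⟨_, le_rfl, h.iterate_depth r₁⟩

theorem cycleMap_orderEmbOfFin (i : Fin #(pathFinset p r₁ r₂)) :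
    cycleMap p r₁ r₂ ((pathFinset p r₁ r₂).orderEmbOfFin rfl i) = p^[i] r₁ :=
  (orderEmbOfFin _ rfl).injective.extend_apply _ _ _

theorem cycleMap_of_notMem (hx : x ∉ pathFinset p r₁ r₂) : cycleMap p r₁ r₂ x = p x :=
  extend_apply' _ _ _ fun ⟨i, hi⟩ => hx (hi ▸ orderEmbOfFin_mem _ _ i)

theorem cycleMap_eq
    (hf : ∀ i, f ((pathFinset p r₁ r₂).orderEmbOfFin rfl i) = p^[i] r₁)
    (hp : ∀ x ∉ pathFinset p r₁ r₂, f x = p x) : cycleMap p r₁ r₂ = f := by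
  funext x
  by_cases hx : x ∈ pathFinset p r₁ r₂
  · obtain ⟨i, rfl⟩ : x ∈ Set.range ((pathFinset p r₁ r₂).orderEmbOfFin rfl) := by
      rwa [range_orderEmbOfFin]
    rw [cycleMap_orderEmbOfFin, hf]
  · rw [cycleMap_of_notMem hx, hp x hx]

theorem IsParentMap.periodicPts_cycleMap [Finite V] (h : IsParentMap p r₂) :
    periodicPts (cycleMap p r₁ r₂) = pathFinset p r₁ r₂ := by
  have hcard := h.card_pathFinset (r₁ := r₁)
  set M := pathFinset p r₁ r₂
  have hrange : Set.range (M.orderEmbOfFin rfl) = M := range_orderEmbOfFin _ _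
  have hbound (i : Fin #M) : (i : ℕ) ≤ depth p r₂ r₁ := by omega
  refine periodicPts_eq_of_injOn ?_ ?_ fun x => ?_
  · rw [← hrange]
    rintro _ ⟨i, rfl⟩
    rw [hrange, cycleMap_orderEmbOfFin]
    exact mem_pathFinset.2 ⟨i, hbound i, rfl⟩
  · rw [← hrange]
    rintro _ ⟨i, rfl⟩ _ ⟨j, rfl⟩ hij
    rw [cycleMap_orderEmbOfFin, cycleMap_orderEmbOfFin] at hij
    exact congrArg _ (Fin.ext (h.injOn_iterate (hbound i) (hbound j) hij))
  · refine exists_iterate_mem_of_eqOn_compl (fun y hy => cycleMap_of_notMem hy)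
      (m := depth p r₂ x) ?_
    rw [h.iterate_depth]
    exact h.root_mem_pathFinset

theorem IsParentMap.core_cycleMap [Fintype V] (h : IsParentMap p r₂) :
    core (cycleMap p r₁ r₂) = pathFinset p r₁ r₂ := by
  rw [← coe_inj, core, Set.coe_toFinset, h.periodicPts_cycleMap]

theorem IsParentMap.card_core_cycleMap_sub_one [Fintype V] (h : IsParentMap p r₂) :
    #(core (cycleMap p r₁ r₂)) - 1 = depth p r₂ r₁ := by
  rw [h.core_cycleMap, h.card_pathFinset, Nat.add_sub_cancel]

end CycleMap

section EdgeBound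

theorem msdCard_add_right_le {α : Type*} (a b c : Multiset α) :
    msdCard (a + c) (b + c) ≤ Multiset.card a + Multiset.card b := by
  rw [msdCard, add_tsub_add_eq_tsub_right, add_tsub_add_eq_tsub_right, Multiset.card_add]
  exact add_le_add (Multiset.card_le_card (Multiset.sub_le_self _ _))
    (Multiset.card_le_card (Multiset.sub_le_self _ _))

variable {V : Type*} [Fintype V] [DecidableEq V]

theorem msdCard_map_le {f g : V → V} {t : Finset V} {r : V} (hr : r ∈ t)
    (hfg : ∀ x ∉ t, g x = f x) :
    msdCard (univ.val.map fun x => s(x, f x)) ((univ.erase r).val.map fun x => s(x, g x)) ≤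
      2 * #t - 1 := by
  have huniv : (univ : Finset V).val = t.val + tᶜ.val := by
    rw [← union_compl t, ← disjUnion_eq_union _ _ disjoint_compl_right]
    rfl
  have herase : (univ.erase r).val = (t.erase r).val + tᶜ.val := by
    rw [erase_val, huniv, Multiset.erase_add_left_pos _ hr, ← erase_val]
  have hcompl : tᶜ.val.map (fun x => s(x, g x)) = tᶜ.val.map fun x => s(x, f x) :=
    Multiset.map_congr rfl fun x hx => by rw [hfg x (mem_compl.1 hx)]
  rw [herase, huniv, Multiset.map_add, Multiset.map_add, hcompl]
  refine (msdCard_add_right_le _ _ _).trans_eq ?_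
  rw [Multiset.card_map, Multiset.card_map, ← card_def, ← card_def, card_erase_of_mem hr]
  have := card_pos.2 ⟨r, hr⟩
  omega

end EdgeBound

section JoyalMaps

variable {V : Type*} [Fintype V] [LinearOrder V] [Nonempty V] {f p : V → V} {r₁ r₂ x : V}

noncomputable def coreSeq (f : V → V) : Fin (#(core f) - 1 + 1) → V :=
  f ∘ (core f).orderEmbOfFin (Nat.sub_add_cancel (card_core_pos f)).symm

noncomputable def treeMap (f : V → V) : V → V := pathMap (coreSeq f) f

theorem coreSeq_injective : Injective (coreSeq f) := fun i j hij =>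
  (orderEmbOfFin _ _).injective <| (bijOn_periodicPts f).injOn
    (mem_core.1 (orderEmbOfFin_mem _ _ i)) (mem_core.1 (orderEmbOfFin_mem _ _ j)) hij

theorem range_coreSeq : Set.range (coreSeq f) = core f := by
  rw [coreSeq, Set.range_comp, range_orderEmbOfFin, core, Set.coe_toFinset,
    (bijOn_periodicPts f).image_eq]

theorem treeMap_of_notMem (hx : x ∉ core f) : treeMap f x = f x :=
  pathMap_of_notMem (range_coreSeq (f := f) ▸ hx)

theorem isParentMap_treeMap (f : V → V) :
    IsParentMap (treeMap f) (coreSeq f (Fin.last _)) :=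
  isParentMap_pathMap coreSeq_injective fun x =>
    range_coreSeq (f := f) ▸ (exists_iterate_mem_periodicPts f x).imp fun _ => mem_core.2

theorem iterate_treeMap (i : ℕ) :
    (treeMap f)^[i] (coreSeq f 0) = coreSeq f (Fin.clamp i _) := by
  have h0 : Fin.clamp 0 (#(core f) - 1) = 0 := rfl
  rw [treeMap, ← h0, iterate_pathMap coreSeq_injective, zero_add]

theorem depth_treeMap :
    depth (treeMap f) (coreSeq f (Fin.last _)) (coreSeq f 0) = #(core f) - 1 := by
  have hlast : Fin.clamp (#(core f) - 1) (#(core f) - 1) = Fin.last _ := by ext; simp [Fin.clamp]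
  refine le_antisymm (Nat.sInf_le ?_) ?_
  · show (treeMap f)^[_] _ = _
    rw [iterate_treeMap, hlast]
  · have := (isParentMap_treeMap f).iterate_depth (coreSeq f 0)
    rw [iterate_treeMap] at this
    have := congrArg Fin.val (coreSeq_injective this)
    simp only [Fin.clamp, Fin.val_last] at this
    omega

theorem pathFinset_treeMap :
    pathFinset (treeMap f) (coreSeq f 0) (coreSeq f (Fin.last _)) = core f := by
  ext x
  rw [mem_pathFinset, depth_treeMap, ← Finset.mem_coe, ← range_coreSeq]
  simp only [iterate_treeMap, Set.mem_range]
  constructor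
  · rintro ⟨i, -, hi⟩
    exact ⟨_, hi⟩
  · rintro ⟨i, rfl⟩
    refine ⟨i, Nat.le_of_lt_succ i.2, congrArg _ (Fin.ext ?_)⟩
    simp [Fin.clamp, Nat.le_of_lt_succ i.2]

theorem cycleMap_treeMap :
    cycleMap (treeMap f) (coreSeq f 0) (coreSeq f (Fin.last _)) = f := by
  refine cycleMap_eq ?_ ?_ <;> rw [pathFinset_treeMap]
  · intro i
    rw [iterate_treeMap, coreSeq, comp_apply]
    exact congrArg f (orderEmbOfFin_congr rfl _ _ (by simp [Fin.clamp]; omega))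
  · exact fun x hx => (treeMap_of_notMem hx).symm

theorem IsParentMap.coreSeq_cycleMap (h : IsParentMap p r₂)
    (i : Fin (#(core (cycleMap p r₁ r₂)) - 1 + 1)) :
    coreSeq (cycleMap p r₁ r₂) i = p^[i] r₁ := by
  have hi : (i : ℕ) < #(pathFinset p r₁ r₂) := by
    have := i.2
    have := card_core_pos (cycleMap p r₁ r₂)
    have : #(core (cycleMap p r₁ r₂)) = #(pathFinset p r₁ r₂) := by rw [h.core_cycleMap]
    omega
  rw [coreSeq, comp_apply, orderEmbOfFin_congr (i := i) h.core_cycleMap _ rfl (j := ⟨i, hi⟩) rfl,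
    cycleMap_orderEmbOfFin]

theorem IsParentMap.coreSeq_cycleMap_zero (h : IsParentMap p r₂) :
    coreSeq (cycleMap p r₁ r₂) 0 = r₁ :=
  h.coreSeq_cycleMap 0

theorem IsParentMap.coreSeq_cycleMap_last (h : IsParentMap p r₂) :
    coreSeq (cycleMap p r₁ r₂) (Fin.last _) = r₂ := by
  rw [h.coreSeq_cycleMap, Fin.val_last, h.card_core_cycleMap_sub_one, h.iterate_depth]

theorem IsParentMap.treeMap_cycleMap (h : IsParentMap p r₂) : treeMap (cycleMap p r₁ r₂) = p := by
  refine pathMap_eq coreSeq_injective (fun i => ?_) fun x hx => ?_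
  · have hi := Nat.le_of_lt_succ i.2
    rw [h.coreSeq_cycleMap, h.coreSeq_cycleMap, ← iterate_succ_apply' p]
    rcases hi.lt_or_eq with hlt | heq
    · simp [Fin.clamp, Nat.succ_le_of_lt hlt]
    · simp only [Fin.clamp, heq, Nat.succ_eq_add_one, Nat.min_eq_right (Nat.le_succ _)]
      rw [iterate_succ_apply', h.card_core_cycleMap_sub_one, h.iterate_depth, h.1]
  · rw [range_coreSeq, coe_inj.mpr h.core_cycleMap] at hx
    exact cycleMap_of_notMem hx

theorem msdCard_graphOf_treeMap_le (f : V → V) :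
    msdCard (univ.val.map fun x => s(x, f x)) (graphOf (treeMap f)).edgeSet.toFinite.toFinset.val
      ≤ 2 * #(core f) - 1 := by
  rw [(isParentMap_treeMap f).edgeSet_toFinset_val]
  refine msdCard_map_le ?_ fun x hx => treeMap_of_notMem hx
  rw [← mem_coe, ← range_coreSeq]
  exact Set.mem_range_self _

end JoyalMaps

section DoublyRootedTree

variable {n : ℕ}

noncomputable def toTree [Nonempty (Fin n)] (f : Fin n → Fin n) : DoublyRootedTree n where
  tree := graphOf (treeMap f)
  isTree := (isParentMap_treeMap f).isTree
  r1 := coreSeq f 0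
  r2 := coreSeq f (Fin.last _)

noncomputable def ofTree (t : DoublyRootedTree n) : Fin n → Fin n :=
  cycleMap (parentMap t.tree t.r2) t.r1 t.r2

theorem ofTree_toTree [Nonempty (Fin n)] (f : Fin n → Fin n) : ofTree (toTree f) = f := by
  rw [ofTree, toTree]
  dsimp only
  rw [(isParentMap_treeMap f).parentMap_graphOf, cycleMap_treeMap]

theorem toTree_ofTree [Nonempty (Fin n)] (t : DoublyRootedTree n) : toTree (ofTree t) = t := by
  obtain ⟨T, hT, r₁, r₂⟩ := t
  have h := isParentMap_parentMap (r := r₂) hT.1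
  change toTree (cycleMap (parentMap T r₂) r₁ r₂) = _
  simp only [toTree, h.treeMap_cycleMap, graphOf_parentMap hT, h.coreSeq_cycleMap_zero,
    h.coreSeq_cycleMap_last]

end DoublyRootedTree

end Joyal

theorem joyal_bijection (n : ℕ) (hn : 1 ≤ n) :
    ∃ J : (Fin n → Fin n) ≃ DoublyRootedTree n,
      ∀ f : Fin n → Fin n,
        msdCard (funEdges f) (graphEdges (J f).tree) ≤
          2 * Set.ncard {x | inCore f x} - 1 := by
  have : Nonempty (Fin n) := ⟨⟨0, hn⟩⟩
  refine ⟨⟨Joyal.toTree, Joyal.ofTree, Joyal.ofTree_toTree, Joyal.toTree_ofTree⟩, fun f => ?_⟩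
  rw [Joyal.ncard_setOf_inCore]
  exact Joyal.msdCard_graphOf_treeMap_le f
end

section
/- Let C_n denote the number of cycles of a uniformly random function f : {1,…,n} → {1,…,n} (the number of cycles of the permutation obtained by restricting f to its core). Then for every t > 0 and every ε > 0 there exists N such that for all n ≥ N, P(C_n > (1+t)·log n) ≤ (1+ε)·exp(−(t²/(2+t))·(log n)/4), where log denotes the natural logarithm. -/
/-!
Expanding `(1 + s) ^ C(f) = ∑ s ^ #U` over the sets `U` of cycles of `f`, and encoding a cycle by
the word of its points read from its least point, `∑ f, (1 + s) ^ C(f)` becomes a sum over sets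
`U` of cycle words. A given `U` lies among the cycles of at most `n ^ n * n ^ (-ℓ(U))` maps, `ℓ(U)`
the total length of its words, since such a map is prescribed on `ℓ(U)` points. Hence
`E (1 + s) ^ C_n ≤ ∏ w, (1 + s * n ^ (-ℓ(w))) ≤ exp (s * ∑ w, n ^ (-ℓ(w))) ≤ exp (s * H_n)`,
the last step because the rotations of the cycle words of length `j` are distinct words, so there
are at most `n ^ j / j` of them. Markov's inequality with `s = t`, `H_n ≤ 1 + log n` and
`log (1 + t) ≥ 2t / (2 + t)` bounds the tail by `exp (t - t ^ 2 / (2 + t) * log n)`, which is below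
the claimed bound as soon as `log n ≥ 4 (2 + t) / (3 t)`.
-/

open scoped Classical

/-- The number of cycles of a self-map: the number of distinct forward orbits
of points of the core (each cycle is the forward orbit of any of its points). -/
noncomputable def cycleCount {V : Type*} (f : V → V) : ℕ :=
  Set.ncard ((fun x => {y | ∃ j : ℕ, f^[j] x = y}) '' {x | inCore f x})

/-- Probability of an event under the uniform distribution over all
functions `Fin n → Fin n`. -/
noncomputable def mapPr (n : ℕ) (P : (Fin n → Fin n) → Prop) : ℝ :=
  ((Finset.univ.filter P).card : ℝ) / ((Finset.univ : Finset (Fin n → Fin n)).card : ℝ)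

open Function Finset

theorem card_filter_forall_mem_eq {α β : Type*} [Fintype α] [DecidableEq α] [Fintype β]
    [DecidableEq β] (D : Finset α) (g : α → β) :
    #{f : α → β | ∀ x ∈ D, f x = g x} = Fintype.card β ^ (Fintype.card α - #D) := by
  have hpi : ({f : α → β | ∀ x ∈ D, f x = g x} : Finset _) =
      Fintype.piFinset fun x => if x ∈ D then {g x} else univ := by
    ext f
    simp only [mem_filter, mem_univ, true_and, Fintype.mem_piFinset]
    refine forall_congr' fun x => ?_
    split_ifs with hx <;> simp [hx]
  rw [hpi, Fintype.card_piFinset]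
  simp only [apply_ite card, card_singleton, card_univ, prod_ite, prod_const_one, one_mul,
    prod_const, ← card_compl]
  congr 2
  ext
  simp

section CycleWords

variable {α : Type*} [LinearOrder α]

def IsCycleWord {j : ℕ} (v : Fin (j + 1) → α) : Prop := Injective v ∧ ∀ i, v 0 ≤ v i

variable [Fintype α]

theorem card_isCycleWord_mul_le (j : ℕ) :
    #{v : Fin (j + 1) → α | IsCycleWord v} * (j + 1) ≤ Fintype.card α ^ (j + 1) := by
  let rotate (p : {v : Fin (j + 1) → α // IsCycleWord v} × Fin (j + 1)) : Fin (j + 1) → α :=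
    fun i => p.1.1 (i + p.2)
  -- A cycle word is recovered from any of its rotations as the rotation starting at its least
  -- letter.
  have hrotate : Injective rotate := by
    rintro ⟨⟨v, hv_inj, hv_min⟩, r⟩ ⟨⟨v', hv'_inj, hv'_min⟩, r'⟩ h
    have hv : ∀ i, v (i + r) = v' (i + r') := congrFun h
    have hv₀ : v (-r' + r) = v' 0 := by simpa using hv (-r')
    have hv'₀ : v' (-r + r') = v 0 := by simpa using (hv (-r)).symm
    have h₀ : v 0 = v' 0 := le_antisymm (hv₀ ▸ hv_min _) (hv'₀ ▸ hv'_min _)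
    obtain rfl : r = r' := neg_add_eq_zero.mp (hv'_inj (hv'₀.trans h₀))
    obtain rfl : v = v' := funext fun i => by simpa using hv (i - r)
    rfl
  simpa [Fintype.card_prod, Fintype.card_subtype] using Fintype.card_le_of_injective _ hrotate

variable (α) in
noncomputable def cycleWords : Finset (Σ j : ℕ, Fin (j + 1) → α) :=
  (range (Fintype.card α)).sigma fun j => {v : Fin (j + 1) → α | IsCycleWord v}

theorem sum_cycleWords_inv_pow_le :
    ∑ w ∈ cycleWords α, ((Fintype.card α : ℝ)⁻¹) ^ (w.1 + 1) ≤ harmonic (Fintype.card α) := by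
  rw [cycleWords, sum_sigma, harmonic]
  push_cast
  refine sum_le_sum fun j hj => ?_
  have hn : (0 : ℝ) < Fintype.card α := Nat.cast_pos.mpr (Nat.zero_lt_of_lt (mem_range.mp hj))
  have hcount : (#{v : Fin (j + 1) → α | IsCycleWord v} : ℝ) * (j + 1) ≤
      Fintype.card α ^ (j + 1) := by
    exact_mod_cast card_isCycleWord_mul_le j
  rw [sum_const, nsmul_eq_mul, inv_pow, ← div_eq_mul_inv, div_le_iff₀ (by positivity),
    inv_mul_eq_div, le_div_iff₀ (by positivity)]
  exact hcount

end CycleWords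

section PeriodicPts

variable {α : Type*} {f : α → α} {x : α}

def fwdOrbit (f : α → α) (x : α) : Set α := {y | ∃ j : ℕ, f^[j] x = y}

theorem cycleCount_eq_ncard_image_fwdOrbit (f : α → α) :
    cycleCount f = (fwdOrbit f '' periodicPts f).ncard := rfl

theorem exists_iterate_iterate_eq (hx : x ∈ periodicPts f) (i : ℕ) :
    ∃ k, f^[k] (f^[i] x) = x := by
  obtain ⟨p, hp, hpx⟩ := mem_periodicPts.mp hx
  refine ⟨p * (i + 1) - i, ?_⟩
  rw [← iterate_add_apply, Nat.sub_add_cancel (by nlinarith)]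
  exact (hpx.mul_const _).eq

theorem fwdOrbit_iterate (hx : x ∈ periodicPts f) (i : ℕ) :
    fwdOrbit f (f^[i] x) = fwdOrbit f x := by
  obtain ⟨k, hk⟩ := exists_iterate_iterate_eq hx i
  ext y
  constructor
  · rintro ⟨j, rfl⟩
    exact ⟨j + i, iterate_add_apply f j i x⟩
  · rintro ⟨j, rfl⟩
    exact ⟨j + k, by rw [iterate_add_apply, hk]⟩

noncomputable def cycleWord (f : α → α) (x : α) : Σ j : ℕ, Fin (j + 1) → α :=
  ⟨minimalPeriod f x - 1, fun i => f^[i] x⟩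

theorem cycleWord_fst_add_one (hx : x ∈ periodicPts f) :
    (cycleWord f x).1 + 1 = minimalPeriod f x :=
  Nat.sub_add_cancel (minimalPeriod_pos_of_mem_periodicPts hx)

theorem cycleWord_apply_add_one (hx : x ∈ periodicPts f) (i : Fin ((cycleWord f x).1 + 1)) :
    f ((cycleWord f x).2 i) = (cycleWord f x).2 (i + 1) := by
  suffices ∀ m, m + 1 = minimalPeriod f x → ∀ i : Fin (m + 1),
      f (f^[i] x) = f^[(i + 1 : Fin (m + 1))] x from this _ (cycleWord_fst_add_one hx) i
  intro m hm i
  rw [← iterate_succ_apply' f, Fin.val_add_one]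
  split_ifs with h
  · rw [h, Fin.val_last, Nat.succ_eq_add_one, hm, iterate_minimalPeriod]
    rfl
  · rfl

end PeriodicPts

section CycleMin

variable {α : Type*} [LinearOrder α] {f : α → α} {x y : α}

def IsCycleMin (f : α → α) (x : α) : Prop := x ∈ periodicPts f ∧ ∀ j, x ≤ f^[j] x

theorem IsCycleMin.eq_of_iterate_eq (hx : IsCycleMin f x) (hy : IsCycleMin f y) {i k : ℕ}
    (h : f^[i] x = f^[k] y) : x = y := by
  obtain ⟨a, ha⟩ := exists_iterate_iterate_eq hx.1 i
  obtain ⟨b, hb⟩ := exists_iterate_iterate_eq hy.1 k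
  refine le_antisymm ?_ ?_
  · rw [← hb, ← h, ← iterate_add_apply]; exact hx.2 _
  · rw [← ha, h, ← iterate_add_apply]; exact hy.2 _

theorem exists_isCycleMin_iterate [Finite α] (hx : x ∈ periodicPts f) :
    ∃ i, IsCycleMin f (f^[i] x) := by
  obtain ⟨i, -, hi⟩ := (range (minimalPeriod f x)).exists_min_image (f^[·] x)
    (nonempty_range_iff.mpr (minimalPeriod_pos_of_mem_periodicPts hx).ne')
  refine ⟨i, ?_, fun j => ?_⟩
  · exact mk_mem_periodicPts (minimalPeriod_pos_of_mem_periodicPts hx)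
      ((isPeriodicPt_minimalPeriod f x).apply_iterate i)
  · rw [← iterate_add_apply, ← iterate_mod_minimalPeriod_eq (n := j + i)]
    exact hi _ (mem_range.mpr (Nat.mod_lt _ (minimalPeriod_pos_of_mem_periodicPts hx)))

theorem cycleCount_eq_card_isCycleMin [Fintype α] (f : α → α) :
    cycleCount f = #{x | IsCycleMin f x} := by
  have himage : fwdOrbit f '' periodicPts f = fwdOrbit f '' {x | IsCycleMin f x} := by
    refine Set.Subset.antisymm ?_ (Set.image_mono fun x hx => hx.1)
    rintro _ ⟨x, hx, rfl⟩
    obtain ⟨i, hi⟩ := exists_isCycleMin_iterate hx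
    exact ⟨_, hi, fwdOrbit_iterate hx i⟩
  have hinj : Set.InjOn (fwdOrbit f) {x | IsCycleMin f x} := by
    intro x hx y hy hxy
    obtain ⟨k, hk⟩ : x ∈ fwdOrbit f y := hxy ▸ ⟨0, rfl⟩
    exact hx.eq_of_iterate_eq hy (i := 0) hk.symm
  rw [cycleCount_eq_ncard_image_fwdOrbit, himage, hinj.ncard_image, ← Set.ncard_coe_finset]
  simp

theorem isCycleWord_cycleWord (hx : IsCycleMin f x) : IsCycleWord (cycleWord f x).2 := by
  have hlt (i : Fin ((cycleWord f x).1 + 1)) : (i : ℕ) < minimalPeriod f x :=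
    cycleWord_fst_add_one hx.1 ▸ i.2
  exact ⟨fun i j hij => Fin.ext (iterate_injOn_Iio_minimalPeriod (hlt i) (hlt j) hij),
    fun i => hx.2 i⟩

variable [Fintype α]

noncomputable def cycleWordsOf (f : α → α) : Finset (Σ j : ℕ, Fin (j + 1) → α) :=
  ({x | IsCycleMin f x} : Finset α).image (cycleWord f)

theorem card_cycleWordsOf (f : α → α) : #(cycleWordsOf f) = cycleCount f := by
  rw [cycleCount_eq_card_isCycleMin, cycleWordsOf]
  exact card_image_of_injective _ fun x y h =>
    congrArg (fun w : Σ j : ℕ, Fin (j + 1) → α => w.2 0) h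

theorem cycleWordsOf_subset_cycleWords (f : α → α) : cycleWordsOf f ⊆ cycleWords α := by
  intro w hw
  obtain ⟨x, hx, rfl⟩ := mem_image.mp hw
  have hword := isCycleWord_cycleWord (mem_filter.mp hx).2
  have hlen := Fintype.card_le_of_injective _ hword.1
  rw [Fintype.card_fin] at hlen
  exact mem_sigma.mpr ⟨mem_range.mpr hlen, mem_filter.mpr ⟨mem_univ _, hword⟩⟩

theorem apply_eq_of_mem_cycleWordsOf {w : Σ j : ℕ, Fin (j + 1) → α} (hw : w ∈ cycleWordsOf f)
    (i : Fin (w.1 + 1)) : f (w.2 i) = w.2 (i + 1) := by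
  obtain ⟨x, hx, rfl⟩ := mem_image.mp hw
  exact cycleWord_apply_add_one (mem_filter.mp hx).2.1 i

theorem pairwiseDisjoint_cycleWordsOf (f : α → α) :
    (cycleWordsOf f : Set (Σ j : ℕ, Fin (j + 1) → α)).PairwiseDisjoint
      (fun w => univ.image w.2) := by
  intro w hw w' hw' hne
  obtain ⟨x, hx, rfl⟩ := mem_image.mp hw
  obtain ⟨y, hy, rfl⟩ := mem_image.mp hw'
  refine disjoint_left.mpr fun z hz hz' => hne ?_
  obtain ⟨i, -, rfl⟩ := mem_image.mp hz
  obtain ⟨k, -, hk⟩ := mem_image.mp hz'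
  exact congrArg _ ((mem_filter.mp hx).2.eq_of_iterate_eq (mem_filter.mp hy).2 hk.symm)

theorem card_filter_subset_cycleWordsOf_le [Nonempty α]
    (U : Finset (Σ j : ℕ, Fin (j + 1) → α)) :
    (#{f : α → α | U ⊆ cycleWordsOf f} : ℝ) ≤
      (Fintype.card α : ℝ) ^ Fintype.card α *
        ∏ w ∈ U, ((Fintype.card α : ℝ)⁻¹) ^ (w.1 + 1) := by
  set n := Fintype.card α
  obtain h | ⟨f₀, hf₀⟩ := ({f : α → α | U ⊆ cycleWordsOf f} : Finset _).eq_empty_or_nonempty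
  · rw [h, card_empty, Nat.cast_zero]
    positivity
  replace hf₀ := (mem_filter.mp hf₀).2
  set D := U.biUnion fun w => univ.image w.2
  have hD : #D = ∑ w ∈ U, (w.1 + 1) := by
    rw [card_biUnion ((pairwiseDisjoint_cycleWordsOf f₀).subset (by exact_mod_cast hf₀))]
    refine sum_congr rfl fun w hw => ?_
    obtain ⟨x, hx, rfl⟩ := mem_image.mp (hf₀ hw)
    rw [card_image_of_injective _ (isCycleWord_cycleWord (mem_filter.mp hx).2).1, card_univ,
      Fintype.card_fin]
  have hagree : ({f : α → α | U ⊆ cycleWordsOf f} : Finset _) ⊆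
      ({f : α → α | ∀ y ∈ D, f y = f₀ y} : Finset _) := by
    intro f hf
    refine mem_filter.mpr ⟨mem_univ _, fun y hy => ?_⟩
    obtain ⟨w, hw, hy⟩ := mem_biUnion.mp hy
    obtain ⟨i, -, rfl⟩ := mem_image.mp hy
    rw [apply_eq_of_mem_cycleWordsOf ((mem_filter.mp hf).2 hw),
      apply_eq_of_mem_cycleWordsOf (hf₀ hw)]
  have hn : (n : ℝ) ≠ 0 := (Nat.cast_pos.mpr Fintype.card_pos).ne'
  calc (#{f : α → α | U ⊆ cycleWordsOf f} : ℝ)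
      ≤ #{f : α → α | ∀ y ∈ D, f y = f₀ y} := by exact_mod_cast card_le_card hagree
    _ = (n : ℝ) ^ (n - #D) := by rw [card_filter_forall_mem_eq, Nat.cast_pow]
    _ = (n : ℝ) ^ n * (n : ℝ)⁻¹ ^ #D := by rw [pow_sub₀ _ hn (card_le_univ D), inv_pow]
    _ = _ := by rw [prod_pow_eq_pow_sum, hD]

theorem sum_one_add_pow_cycleCount_le [Nonempty α] {s : ℝ} (hs : 0 ≤ s) :
    ∑ f : α → α, (1 + s) ^ cycleCount f ≤
      (Fintype.card α : ℝ) ^ Fintype.card α * Real.exp (s * harmonic (Fintype.card α)) := by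
  set n := Fintype.card α
  set W := cycleWords α
  have hexpand (f : α → α) : (1 + s) ^ cycleCount f =
      ∑ U ∈ W.powerset, if U ⊆ cycleWordsOf f then s ^ #U else 0 := by
    rw [← card_cycleWordsOf, add_comm, ← sum_pow_mul_eq_add_pow,
      ← sum_subset (powerset_mono.mpr (cycleWordsOf_subset_cycleWords f))
        fun U _ hU => if_neg (by simpa using hU)]
    exact sum_congr rfl fun U hU => by simp [mem_powerset.mp hU]
  calc ∑ f : α → α, (1 + s) ^ cycleCount f
      = ∑ U ∈ W.powerset, s ^ #U * #{f : α → α | U ⊆ cycleWordsOf f} := by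
        simp_rw [hexpand]
        rw [sum_comm]
        refine sum_congr rfl fun U _ => ?_
        rw [sum_ite, sum_const_zero, add_zero, sum_const, nsmul_eq_mul, mul_comm]
    _ ≤ ∑ U ∈ W.powerset, s ^ #U * ((n : ℝ) ^ n * ∏ w ∈ U, (n : ℝ)⁻¹ ^ (w.1 + 1)) := by
        gcongr with U
        exact card_filter_subset_cycleWordsOf_le U
    _ = (n : ℝ) ^ n * ∏ w ∈ W, (1 + s * (n : ℝ)⁻¹ ^ (w.1 + 1)) := by
        rw [prod_one_add, mul_sum]
        refine sum_congr rfl fun U _ => ?_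
        rw [prod_mul_distrib, prod_const]
        ring
    _ ≤ (n : ℝ) ^ n * Real.exp (∑ w ∈ W, s * (n : ℝ)⁻¹ ^ (w.1 + 1)) := by
        gcongr
        exact Real.prod_one_add_le_exp_sum _ fun w => by positivity
    _ ≤ (n : ℝ) ^ n * Real.exp (s * harmonic n) := by
        rw [← mul_sum]
        gcongr
        exact sum_cycleWords_inv_pow_le

end CycleMin

theorem mapPr_cycleCount_gt_le {n : ℕ} (hn : 0 < n) {t : ℝ} (ht : 0 ≤ t) (a : ℝ) :
    mapPr n (fun f => (cycleCount f : ℝ) > a) ≤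
      Real.exp (t * harmonic n - a * Real.log (1 + t)) := by
  have : Nonempty (Fin n) := ⟨⟨0, hn⟩⟩
  have hmgf := sum_one_add_pow_cycleCount_le (α := Fin n) ht
  rw [Fintype.card_fin] at hmgf
  have hpow (f : Fin n → Fin n) : (1 + t) ^ cycleCount f =
      Real.exp (cycleCount f * Real.log (1 + t)) := by
    rw [Real.exp_nat_mul, Real.exp_log (by linarith)]
  have hmarkov : (#{f : Fin n → Fin n | (cycleCount f : ℝ) > a} : ℝ) *
      Real.exp (a * Real.log (1 + t)) ≤ ∑ f : Fin n → Fin n, (1 + t) ^ cycleCount f := by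
    rw [← nsmul_eq_mul, ← sum_const]
    refine (sum_le_sum fun f hf => ?_).trans
      (sum_le_sum_of_subset_of_nonneg (filter_subset _ _) fun f _ _ => by positivity)
    rw [hpow]
    exact Real.exp_le_exp.mpr (mul_le_mul_of_nonneg_right (mem_filter.mp hf).2.le
      (Real.log_nonneg (by linarith)))
  rw [mapPr, card_univ, Fintype.card_fun, Fintype.card_fin, Nat.cast_pow,
    div_le_iff₀ (by positivity), Real.exp_sub, div_mul_eq_mul_div, le_div_iff₀ (Real.exp_pos _)]
  exact (hmarkov.trans hmgf).trans_eq (mul_comm _ _)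

theorem chernoff_exponent_le {t L H : ℝ} (ht : 0 < t) (hL : 4 * (2 + t) / (3 * t) ≤ L)
    (hH : H ≤ 1 + L) :
    t * H - (1 + t) * L * Real.log (1 + t) ≤ -(t ^ 2 / (2 + t)) * L / 4 := by
  have hL0 : 0 ≤ L := le_trans (by positivity) hL
  have hlog : t + t ^ 2 / (2 + t) ≤ (1 + t) * Real.log (1 + t) :=
    calc t + t ^ 2 / (2 + t) = (1 + t) * (2 * t / (t + 2)) := by field_simp; ring
      _ ≤ (1 + t) * Real.log (1 + t) := by
        gcongr
        exact Real.le_log_one_add_of_nonneg ht.le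
  have hlarge : t ≤ 3 / 4 * (t ^ 2 / (2 + t)) * L :=
    calc t = 3 / 4 * (t ^ 2 / (2 + t)) * (4 * (2 + t) / (3 * t)) := by field_simp
      _ ≤ 3 / 4 * (t ^ 2 / (2 + t)) * L := by gcongr
  nlinarith [mul_le_mul_of_nonneg_left hlog hL0, mul_le_mul_of_nonneg_left hH ht.le]

theorem cycle_distribution_random_mapping (t ε : ℝ) (ht : 0 < t) (hε : 0 < ε) :
    ∃ N : ℕ, ∀ n ≥ N,
      mapPr n (fun f => (cycleCount f : ℝ) > (1 + t) * Real.log n) ≤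
        (1 + ε) * Real.exp (-(t ^ 2 / (2 + t)) * Real.log n / 4) := by
  refine ⟨⌈Real.exp (4 * (2 + t) / (3 * t))⌉₊ + 1, fun n hn => ?_⟩
  have hn₀ : 0 < n := by omega
  have hexp : Real.exp (4 * (2 + t) / (3 * t)) ≤ n :=
    (Nat.le_ceil _).trans (mod_cast (Nat.le_succ _).trans hn)
  have hlog : 4 * (2 + t) / (3 * t) ≤ Real.log n :=
    (Real.le_log_iff_exp_le (by positivity)).mpr hexp
  calc mapPr n (fun f => (cycleCount f : ℝ) > (1 + t) * Real.log n)
      ≤ Real.exp (t * harmonic n - (1 + t) * Real.log n * Real.log (1 + t)) :=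
        mapPr_cycleCount_gt_le hn₀ ht.le _
    _ ≤ Real.exp (-(t ^ 2 / (2 + t)) * Real.log n / 4) :=
        Real.exp_le_exp.mpr (chernoff_exponent_le ht hlog (harmonic_le_one_add_log n))
    _ ≤ (1 + ε) * Real.exp (-(t ^ 2 / (2 + t)) * Real.log n / 4) :=
        le_mul_of_one_le_left (Real.exp_pos _).le (by linarith)
end

section
/- Let Y_n = |M(f)| denote the size of the core of a uniformly random function f : {1,…,n} → {1,…,n}. Then for all real numbers 0 < a < b, the probability P(a·√n ≤ Y_n ≤ b·√n) converges, as n → ∞, to e^{−a²/2} − e^{−b²/2}. -/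
/-!
A map `f` that fixes every point outside `D` (a map `D → α` in disguise) and whose periodic points
in `D` form the set `K` is the same thing as a permutation of `K` together with a map fixing every
point outside `D \ K` that has no periodic point in `D \ K`. Counting all `n ^ #D` such maps by
their `K` and inducting on `#D` shows that there are `(n - c) * n ^ (c - 1)` maps of the second
kind when `#D = c`. For `D = univ` this counts the maps with a core of each size, and the counts
of cores of size at least `k` telescope to `n (n - 1) ⋯ (n - k + 1) * n ^ (n - k)`, that is
`P(Y_n ≥ k) = ∏_{i < k} (1 - i / n)`.

With `k ~ c √n`, the bounds `exp (-x - 2 x²) ≤ 1 - x ≤ exp (-x)` (for `x ≤ 1/2`), together with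
`∑_{i < k} i / n → c² / 2` and `∑_{i < k} (i / n)² → 0`, give `P(Y_n ≥ k) → exp (-c² / 2)`.
-/

open scoped Classical

namespace Function

variable {α : Type*} {f g : α → α} {s : Set α} {x : α}

theorem mem_of_mem_periodicPts_of_apply_mem (hx : x ∈ periodicPts f) (hs : Set.MapsTo f s s)
    (hfx : f x ∈ s) : x ∈ s := by
  obtain ⟨m, hm, hper⟩ := hx
  rw [← hper.eq, ← Nat.sub_add_cancel hm, iterate_add_apply, iterate_one]
  exact hs.iterate _ hfx

theorem mapsTo_periodicPts_inter (hs : Set.MapsTo f sᶜ sᶜ) :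
    Set.MapsTo f (periodicPts f ∩ s) (periodicPts f ∩ s) := fun _ ⟨hx, hxs⟩ =>
  ⟨(bijOn_periodicPts f).mapsTo hx,
    by_contra fun hfx => mem_of_mem_periodicPts_of_apply_mem hx hs hfx hxs⟩

theorem iterate_eq_of_eqOn (hs : Set.MapsTo f s s) (h : Set.EqOn f g s) (hx : x ∈ s) (n : ℕ) :
    f^[n] x = g^[n] x := by
  induction n with
  | zero => rfl
  | succ n ih => rw [iterate_succ_apply', iterate_succ_apply', ← ih, h (hs.iterate n hx)]

theorem periodicPts_inter_eq_of_eqOn (hs : Set.MapsTo f s s) (h : Set.EqOn f g s) :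
    periodicPts f ∩ s = periodicPts g ∩ s := by
  ext x
  constructor <;> rintro ⟨⟨n, hn, hper⟩, hx⟩ <;> refine ⟨⟨n, hn, ?_⟩, hx⟩
  · rw [IsPeriodicPt, IsFixedPt, ← iterate_eq_of_eqOn hs h hx]; exact hper
  · rw [IsPeriodicPt, IsFixedPt, iterate_eq_of_eqOn hs h hx]; exact hper

end Function

namespace CoreCount

open Finset Function
open scoped Nat

section

variable {α : Type*} {D : Finset α} {f : α → α}

noncomputable def periodicPtsIn (D : Finset α) (f : α → α) : Finset α :=
  {x ∈ D | x ∈ periodicPts f}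

theorem coe_periodicPtsIn : (periodicPtsIn D f : Set α) = periodicPts f ∩ D := by
  ext x; simp [periodicPtsIn, and_comm]

end

theorem injective_piecewise_id {α : Type*} [DecidableEq α] {K : Finset α} {f : α → α}
    (hmaps : Set.MapsTo f K K) (hinj : Set.InjOn f K) : Injective (K.piecewise f id) := by
  intro x y h
  by_cases hx : x ∈ K <;> by_cases hy : y ∈ K <;>
    simp only [Finset.piecewise, hx, hy, if_true, if_false, id] at h
  · exact hinj hx hy h
  · exact absurd (h ▸ hmaps hx) hy
  · exact absurd (h ▸ hmaps hy) hx
  · exact h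

theorem ncard_periodicPts {α : Type*} [Fintype α] (f : α → α) :
    (periodicPts f).ncard = #(periodicPtsIn univ f) := by
  rw [← Set.ncard_coe_finset, coe_periodicPtsIn, coe_univ, Set.inter_univ]

variable {α : Type*} [Fintype α] [DecidableEq α] {D K : Finset α} {f p g : α → α}

/-- The maps `D → α`, extended by the identity outside `D`. -/
def mapsOn (D : Finset α) : Finset (α → α) := {f | ∀ x ∉ D, f x = x}

noncomputable def permsOn (K : Finset α) : Finset (α → α) := {p ∈ mapsOn K | Injective p}

noncomputable def acyclicOn (D : Finset α) : Finset (α → α) :=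
  {f ∈ mapsOn D | periodicPtsIn D f = ∅}

theorem mem_mapsOn : f ∈ mapsOn D ↔ ∀ x ∉ D, f x = x := by simp [mapsOn]

theorem mapsTo_compl_of_mem_mapsOn (hf : f ∈ mapsOn D) : Set.MapsTo f (↑D)ᶜ (↑D)ᶜ :=
  fun x hx => by rwa [mem_mapsOn.1 hf x hx]

theorem card_mapsOn (D : Finset α) : #(mapsOn D) = Fintype.card α ^ #D := by
  have : mapsOn D = Fintype.piFinset fun x => if x ∈ D then univ else {x} := by
    ext f; simp only [mem_mapsOn, Fintype.mem_piFinset]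
    refine forall_congr' fun x => ?_
    split_ifs with hx <;> simp [hx]
  rw [this, Fintype.card_piFinset]
  simp [apply_ite card, prod_ite_mem]

theorem card_permsOn (K : Finset α) : #(permsOn K) = (#K)! := by
  have hperm : permsOn K = Finset.map ⟨fun σ : Equiv.Perm α => ⇑σ, DFunLike.coe_injective⟩
      {σ : Equiv.Perm α | ∀ x ∉ K, σ x = x} := by
    ext p
    simp only [permsOn, mem_filter, mem_mapsOn, mem_map, mem_univ, true_and,
      Embedding.coeFn_mk]
    constructor
    · rintro ⟨hp, hinj⟩
      exact ⟨Equiv.ofBijective p (Finite.injective_iff_bijective.1 hinj), hp, rfl⟩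
    · rintro ⟨σ, hσ, rfl⟩
      exact ⟨hσ, σ.injective⟩
  rw [hperm, card_map, ← Fintype.card_subtype, ← Fintype.card_congr
    (Equiv.Perm.subtypeEquivSubtypePerm (· ∈ K)), Fintype.card_perm, Fintype.card_coe]

theorem mapsTo_of_mem_permsOn (hp : p ∈ permsOn K) : Set.MapsTo p K K := by
  have h := mapsTo_periodicPts_inter (mapsTo_compl_of_mem_mapsOn (mem_filter.1 hp).1)
  rwa [injective_iff_periodicPts_eq_univ.1 (mem_filter.1 hp).2, Set.univ_inter] at h

theorem piecewise_mem_permsOn (hf : f ∈ mapsOn D) (hK : periodicPtsIn D f = K) :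
    K.piecewise f id ∈ permsOn K := by
  have hKf : (K : Set α) = periodicPts f ∩ D := by rw [← hK, coe_periodicPtsIn]
  refine mem_filter.2 ⟨mem_mapsOn.2 fun x hx => piecewise_eq_of_notMem _ _ _ hx, ?_⟩
  refine injective_piecewise_id ?_ ?_
  · rw [hKf]; exact mapsTo_periodicPts_inter (mapsTo_compl_of_mem_mapsOn hf)
  · rw [hKf]; exact (bijOn_periodicPts f).injOn.mono Set.inter_subset_left

theorem piecewise_mem_acyclicOn (hK : periodicPtsIn D f = K) :
    (D \ K).piecewise f id ∈ acyclicOn (D \ K) := by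
  set g := (D \ K).piecewise f id
  have hg : g ∈ mapsOn (D \ K) := mem_mapsOn.2 fun x hx => piecewise_eq_of_notMem _ _ _ hx
  refine mem_filter.2 ⟨hg, ?_⟩
  rw [← coe_eq_empty, coe_periodicPtsIn]
  -- on its periodic points in `D \ K`, which form an invariant set, `g` agrees with `f`
  have hS := mapsTo_periodicPts_inter (mapsTo_compl_of_mem_mapsOn hg)
  have hfg := periodicPts_inter_eq_of_eqOn hS fun x hx => piecewise_eq_of_mem _ _ _ hx.2
  rw [← Set.inter_assoc, Set.inter_self] at hfg
  refine Set.eq_empty_of_forall_notMem fun x hx => ?_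
  have hxf : x ∈ periodicPts f := (hfg ▸ hx).1
  have hxD := mem_sdiff.1 hx.2
  exact hxD.2 (hK ▸ mem_filter.2 ⟨hxD.1, hxf⟩)

theorem piecewise_mem_mapsOn_and_periodicPtsIn_eq (hKD : K ⊆ D) (hp : p ∈ permsOn K)
    (hg : g ∈ acyclicOn (D \ K)) :
    K.piecewise p g ∈ mapsOn D ∧ periodicPtsIn D (K.piecewise p g) = K := by
  set c := K.piecewise p g
  have hgD := mem_mapsOn.1 (mem_filter.1 hg).1
  have hc : c ∈ mapsOn D := mem_mapsOn.2 fun x hx => by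
    rw [show c x = g x from piecewise_eq_of_notMem _ _ _ fun h => hx (hKD h)]
    exact hgD x fun h => hx (mem_sdiff.1 h).1
  have hpK := mapsTo_of_mem_permsOn hp
  have hK : (K : Set α) ⊆ periodicPts c := by
    have h := periodicPts_inter_eq_of_eqOn (g := c) hpK fun x hx =>
      (piecewise_eq_of_mem _ _ _ hx).symm
    rw [injective_iff_periodicPts_eq_univ.1 (mem_filter.1 hp).2, Set.univ_inter] at h
    exact h ▸ Set.inter_subset_left
  have hcDK : Set.MapsTo c (↑(D \ K))ᶜ (↑(D \ K))ᶜ := fun x hx => by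
    by_cases hxK : x ∈ K
    · simp [c, hxK, hpK hxK]
    · have hxD : x ∉ D := by simpa [hxK] using hx
      simpa [mem_mapsOn.1 hc x hxD] using hx
  -- the periodic points of `c` in `D \ K` form an invariant set on which `c` agrees with `g`
  have hcg := periodicPts_inter_eq_of_eqOn (mapsTo_periodicPts_inter hcDK)
    fun x hx => piecewise_eq_of_notMem _ _ _ (mem_sdiff.1 hx.2).2
  rw [← Set.inter_assoc, Set.inter_self] at hcg
  have hgDK : periodicPts g ∩ ↑(D \ K) = ∅ := by
    rw [← coe_periodicPtsIn, (mem_filter.1 hg).2, coe_empty]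
  refine ⟨hc, coe_injective ?_⟩
  rw [coe_periodicPtsIn]
  refine Set.Subset.antisymm (fun x ⟨hxc, hxD⟩ => by_contra fun hxK => ?_)
    (Set.subset_inter hK (coe_subset.2 hKD))
  have hx : x ∈ periodicPts c ∩ ↑(D \ K) := ⟨hxc, by simpa [hxK] using hxD⟩
  rw [hcg] at hx
  exact (hgDK ▸ Set.mem_inter hx.1 hx.2.2 : x ∈ (∅ : Set α))

theorem card_filter_periodicPtsIn_eq (hKD : K ⊆ D) :
    #{f ∈ mapsOn D | periodicPtsIn D f = K} = (#K)! * #(acyclicOn (D \ K)) := by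
  rw [← card_permsOn, ← card_product]
  refine card_nbij' (fun f => (K.piecewise f id, (D \ K).piecewise f id))
    (fun pg => K.piecewise pg.1 pg.2) (fun f hf => ?_) (fun pg hpg => ?_) (fun f hf => ?_)
    (fun pg hpg => ?_)
  · obtain ⟨hfD, hfK⟩ := mem_filter.1 hf
    exact mem_product.2 ⟨piecewise_mem_permsOn hfD hfK, piecewise_mem_acyclicOn hfK⟩
  · obtain ⟨hp, hg⟩ := mem_product.1 hpg
    exact mem_filter.2 (piecewise_mem_mapsOn_and_periodicPtsIn_eq hKD hp hg)
  · have hfD := mem_mapsOn.1 (mem_filter.1 hf).1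
    funext x
    by_cases hxK : x ∈ K
    · simp [hxK]
    · by_cases hxD : x ∈ D
      · simp [hxK, hxD]
      · simp [hxK, hxD, hfD x hxD]
  · obtain ⟨hp, hg⟩ := mem_product.1 hpg
    have hpK := mem_mapsOn.1 (mem_filter.1 hp).1
    have hgDK := mem_mapsOn.1 (mem_filter.1 hg).1
    refine Prod.ext (funext fun x => ?_) (funext fun x => ?_)
    · by_cases hxK : x ∈ K
      · simp [hxK]
      · simp [hxK, hpK x hxK]
    · by_cases hx : x ∈ D \ K
      · simp [hx, (mem_sdiff.1 hx).2]
      · simp [hx, hgDK x hx]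

theorem pow_card_eq_sum_powerset (D : Finset α) :
    Fintype.card α ^ #D = ∑ K ∈ D.powerset, (#K)! * #(acyclicOn (D \ K)) := by
  rw [← card_mapsOn, card_eq_sum_card_fiberwise (f := periodicPtsIn D) (t := D.powerset)
    fun f _ => mem_powerset.2 (filter_subset _ _)]
  exact sum_congr rfl fun K hK => card_filter_periodicPtsIn_eq (mem_powerset.1 hK)

/-- `(n - c) * n ^ (c - 1)`, the number of forests on `n` labelled vertices whose roots are `n - c`
given ones: the size of `acyclicOn D` for `#D = c` and `n = Fintype.card α`. -/
def acyclicCount (n : ℕ) : ℕ → ℕ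
  | 0 => 1
  | c + 1 => (n - (c + 1)) * n ^ c

theorem sum_descFactorial_mul_acyclicCount {n c : ℕ} (hc : c ≤ n) :
    ∑ j ∈ range (c + 1), c.descFactorial j * acyclicCount n (c - j) = n ^ c := by
  induction c with
  | zero => simp [acyclicCount]
  | succ c ih =>
    rw [sum_range_succ', Nat.sub_zero, Nat.descFactorial_zero, one_mul]
    simp_rw [Nat.succ_descFactorial_succ, Nat.succ_sub_succ, mul_assoc, ← mul_sum,
      ih (by omega), acyclicCount, ← add_mul, pow_succ, mul_comm (n ^ c)]
    congr 1
    omega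

theorem descFactorial_mul_acyclicCount_add {n k : ℕ} (hk : k < n) :
    n.descFactorial k * acyclicCount n (n - k) + n.descFactorial (k + 1) * n ^ (n - (k + 1)) =
      n.descFactorial k * n ^ (n - k) := by
  obtain ⟨d, rfl⟩ : ∃ d, n = k + d + 1 := ⟨n - k - 1, by omega⟩
  rw [Nat.descFactorial_succ, show k + d + 1 - k = d + 1 by omega,
    show k + d + 1 - (k + 1) = d by omega, acyclicCount, show k + d + 1 - (d + 1) = k by omega]
  ring

theorem card_acyclicOn (D : Finset α) : #(acyclicOn D) = acyclicCount (Fintype.card α) #D := by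
  induction hc : #D using Nat.strong_induction_on generalizing D with
  | _ c ih =>
  subst hc
  have hrec := pow_card_eq_sum_powerset D
  have hclosed : Fintype.card α ^ #D =
      ∑ K ∈ D.powerset, (#K)! * acyclicCount (Fintype.card α) (#D - #K) := by
    rw [sum_powerset_apply_card (f := fun j => j ! * acyclicCount (Fintype.card α) (#D - j)),
      ← sum_descFactorial_mul_acyclicCount (card_le_univ D)]
    refine sum_congr rfl fun j _ => ?_
    rw [smul_eq_mul, Nat.descFactorial_eq_factorial_mul_choose]
    ring
  have hterms : ∑ K ∈ D.powerset.erase ∅, (#K)! * #(acyclicOn (D \ K)) =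
      ∑ K ∈ D.powerset.erase ∅, (#K)! * acyclicCount (Fintype.card α) (#D - #K) := by
    refine sum_congr rfl fun K hK => ?_
    obtain ⟨hKne, hKD⟩ := mem_erase.1 hK
    have hcard : #(D \ K) = #D - #K := card_sdiff_of_subset (mem_powerset.1 hKD)
    have hpos : 0 < #K := card_pos.2 (nonempty_iff_ne_empty.2 hKne)
    have hle : #K ≤ #D := card_le_card (mem_powerset.1 hKD)
    rw [ih _ (by omega) _ hcard]
  -- the terms with `K ≠ ∅` of the two sums agree, hence so do those with `K = ∅`
  rw [← add_sum_erase _ _ (empty_mem_powerset D)] at hrec hclosed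
  simp only [card_empty, Nat.factorial_zero, one_mul, sdiff_empty, Nat.sub_zero] at hrec hclosed
  omega

theorem card_filter_ncard_periodicPts_eq (m : ℕ) :
    #{f : α → α | (periodicPts f).ncard = m} =
      (Fintype.card α).descFactorial m * acyclicCount (Fintype.card α) (Fintype.card α - m) := by
  simp_rw [ncard_periodicPts]
  rw [card_eq_sum_card_fiberwise (f := periodicPtsIn univ) (t := powersetCard m univ)
    fun f hf => mem_powersetCard.2 ⟨subset_univ _, (mem_filter.1 hf).2⟩]
  have hfiber : ∀ K ∈ powersetCard m (univ : Finset α),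
      #{f ∈ {f : α → α | #(periodicPtsIn univ f) = m} | periodicPtsIn univ f = K} =
        m ! * acyclicCount (Fintype.card α) (Fintype.card α - m) := by
    intro K hK
    have hKm := (mem_powersetCard.1 hK).2
    calc #{f ∈ {f : α → α | #(periodicPtsIn univ f) = m} | periodicPtsIn univ f = K}
        = #{f ∈ mapsOn (univ : Finset α) | periodicPtsIn univ f = K} := by
          congr 1
          ext f
          simp only [mem_filter, mem_univ, true_and, mem_mapsOn, not_true_eq_false,
            false_imp_iff, implies_true, and_iff_right_iff_imp]
          rintro rfl
          exact hKm
      _ = m ! * acyclicCount (Fintype.card α) (Fintype.card α - m) := by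
          rw [card_filter_periodicPtsIn_eq (subset_univ K), card_acyclicOn, card_univ_sdiff, hKm]
  rw [sum_congr rfl hfiber, sum_const, card_powersetCard, card_univ, smul_eq_mul,
    Nat.descFactorial_eq_factorial_mul_choose]
  ring

theorem card_filter_le_ncard_periodicPts {k : ℕ} (hk : k ≤ Fintype.card α) :
    #{f : α → α | k ≤ (periodicPts f).ncard} =
      (Fintype.card α).descFactorial k * Fintype.card α ^ (Fintype.card α - k) := by
  have hle (f : α → α) : (periodicPts f).ncard ≤ Fintype.card α :=
    (Set.ncard_le_card _).trans_eq Nat.card_eq_fintype_card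
  induction hk using Nat.decreasingInduction with
  | self =>
    rw [filter_congr fun f _ => (hle f).ge_iff_eq, card_filter_ncard_periodicPts_eq, Nat.sub_self,
      acyclicCount, pow_zero]
  | of_succ k hk ih =>
    have hsplit : #{f : α → α | k ≤ (periodicPts f).ncard} =
        #{f : α → α | (periodicPts f).ncard = k} +
          #{f : α → α | k + 1 ≤ (periodicPts f).ncard} := by
      rw [← card_union_of_disjoint (disjoint_filter.2 fun f _ h => by omega), ← filter_or]
      exact congrArg card (filter_congr fun f _ => by omega)
    rw [hsplit, card_filter_ncard_periodicPts_eq, ih, descFactorial_mul_acyclicCount_add hk]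

end CoreCount

open Finset Function Filter Real Topology

theorem prod_range_one_sub_div_mul_pow {n k : ℕ} (hk : k ≤ n) :
    (∏ i ∈ range k, (1 - (i : ℝ) / n)) * (n : ℝ) ^ k = n.descFactorial k := by
  induction k with
  | zero => simp
  | succ k ih =>
    have hn : (n : ℝ) ≠ 0 := Nat.cast_ne_zero.2 (by omega)
    rw [prod_range_succ, pow_succ, Nat.descFactorial_succ, Nat.cast_mul, Nat.cast_sub (by omega),
      ← ih (by omega)]
    field_simp

theorem mapPr_le_ncard_core {n k : ℕ} (hk : k ≤ n) :
    mapPr n (fun f => k ≤ {x | inCore f x}.ncard) = ∏ i ∈ range k, (1 - (i : ℝ) / n) := by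
  have hpow : (n : ℝ) ^ n ≠ 0 := by
    rcases Nat.eq_zero_or_pos n with rfl | hn
    · simp
    · positivity
  -- the core `{x | inCore f x}` is `periodicPts f` by definition
  rw [mapPr, filter_congr_decidable, show #{f : Fin n → Fin n | k ≤ {x | inCore f x}.ncard} = _
    from CoreCount.card_filter_le_ncard_periodicPts (by simpa using hk), card_univ,
    Fintype.card_fun, Fintype.card_fin]
  push_cast
  rw [← prod_range_one_sub_div_mul_pow hk, mul_assoc, ← pow_add, Nat.add_sub_cancel' hk,
    mul_div_cancel_right₀ _ hpow]

theorem mapPr_and_not {n : ℕ} {P Q : (Fin n → Fin n) → Prop} (h : ∀ f, Q f → P f) :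
    mapPr n (fun f => P f ∧ ¬Q f) = mapPr n P - mapPr n Q := by
  have hsub : univ.filter Q ⊆ univ.filter P := monotone_filter_right _ fun f _ => h f
  have hsdiff : univ.filter (fun f => P f ∧ ¬Q f) = univ.filter P \ univ.filter Q := by
    ext f; simp
  rw [mapPr, mapPr, mapPr, filter_congr_decidable, hsdiff, card_sdiff_of_subset hsub,
    Nat.cast_sub (card_le_card hsub), sub_div]

theorem mapPr_ncard_core_mem_Icc {n : ℕ} {u v : ℝ} (hu : 0 ≤ u) (huv : u ≤ v)
    (hv : ⌊v⌋₊ + 1 ≤ n) :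
    mapPr n (fun f => u ≤ ({x | inCore f x}.ncard : ℝ) ∧ ({x | inCore f x}.ncard : ℝ) ≤ v) =
      (∏ i ∈ range ⌈u⌉₊, (1 - (i : ℝ) / n)) - ∏ i ∈ range (⌊v⌋₊ + 1), (1 - (i : ℝ) / n) := by
  have hkl : ⌈u⌉₊ ≤ ⌊v⌋₊ + 1 := (Nat.ceil_le_floor_add_one u).trans (by gcongr)
  have hwindow : ∀ m : ℕ, (u ≤ (m : ℝ) ∧ (m : ℝ) ≤ v) ↔ (⌈u⌉₊ ≤ m ∧ ¬⌊v⌋₊ + 1 ≤ m) := fun m => by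
    rw [Nat.ceil_le, ← Nat.le_floor_iff (hu.trans huv), Nat.add_one_le_iff, not_lt]
  simp only [hwindow]
  rw [mapPr_and_not fun f hf => hkl.trans hf, mapPr_le_ncard_core (hkl.trans hv),
    mapPr_le_ncard_core hv]

theorem exp_neg_sub_two_mul_sq_le_one_sub {x : ℝ} (hx : x ≤ 1 / 2) :
    exp (-x - 2 * x ^ 2) ≤ 1 - x := by
  rw [show -x - 2 * x ^ 2 = -(x + 2 * x ^ 2) by ring, exp_neg, inv_le_iff_one_le_mul₀' (exp_pos _)]
  -- `(1 - x) * (1 + x + 2 * x ^ 2) = 1 + x ^ 2 * (1 - 2 * x) ≥ 1`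
  nlinarith [add_one_le_exp (x + 2 * x ^ 2)]

theorem prod_one_sub_le_exp_neg_sum {ι : Type*} (s : Finset ι) {x : ι → ℝ}
    (hx : ∀ i ∈ s, x i ≤ 1) : ∏ i ∈ s, (1 - x i) ≤ exp (-∑ i ∈ s, x i) := by
  rw [← sum_neg_distrib, exp_sum]
  exact prod_le_prod (fun i hi => by linarith [hx i hi]) fun i _ => one_sub_le_exp_neg _

theorem exp_neg_sum_sub_le_prod_one_sub {ι : Type*} (s : Finset ι) {x : ι → ℝ}
    (hx : ∀ i ∈ s, x i ≤ 1 / 2) :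
    exp (-∑ i ∈ s, x i - 2 * ∑ i ∈ s, x i ^ 2) ≤ ∏ i ∈ s, (1 - x i) := by
  rw [mul_sum, ← sum_neg_distrib, ← sum_sub_distrib, exp_sum]
  exact prod_le_prod (fun i _ => (exp_pos _).le)
    fun i hi => exp_neg_sub_two_mul_sq_le_one_sub (hx i hi)

theorem tendsto_inv_sqrt_natCast : Tendsto (fun N : ℕ => (√N)⁻¹) atTop (𝓝 0) :=
  tendsto_inv_atTop_zero.comp (tendsto_sqrt_atTop.comp tendsto_natCast_atTop_atTop)

theorem tendsto_div_natCast_of_tendsto_div_sqrt {m : ℕ → ℝ} {c : ℝ}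
    (hm : Tendsto (fun N => m N / √N) atTop (𝓝 c)) :
    Tendsto (fun N => m N / N) atTop (𝓝 0) := by
  have h := hm.mul tendsto_inv_sqrt_natCast
  rw [mul_zero] at h
  refine h.congr fun N => ?_
  rw [← div_eq_mul_inv, div_div, mul_self_sqrt (Nat.cast_nonneg _)]

theorem tendsto_div_sqrt_of_abs_sub_le {m : ℕ → ℝ} {c : ℝ} (h : ∀ N, |m N - c * √N| ≤ 1) :
    Tendsto (fun N : ℕ => m N / √N) atTop (𝓝 c) := by
  refine tendsto_iff_norm_sub_tendsto_zero.2 (squeeze_zero' (Eventually.of_forall fun N =>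
    norm_nonneg _) ?_ tendsto_inv_sqrt_natCast)
  filter_upwards [eventually_gt_atTop 0] with N hN
  have hs : 0 < √(N : ℝ) := sqrt_pos.2 (Nat.cast_pos.2 hN)
  rw [norm_eq_abs, show m N / √N - c = (m N - c * √N) / √N by field_simp, abs_div,
    abs_of_pos hs, ← one_div]
  exact div_le_div_of_nonneg_right (h N) hs.le

theorem sum_range_natCast_mul_two (m : ℕ) : (∑ i ∈ range m, (i : ℝ)) * 2 = m * (m - 1) := by
  induction m with
  | zero => simp
  | succ m ih =>
    rw [sum_range_succ, add_mul, ih]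
    push_cast
    ring

theorem tendsto_prod_range_one_sub_div {m : ℕ → ℕ} {c : ℝ}
    (hm : Tendsto (fun N => (m N : ℝ) / √N) atTop (𝓝 c)) :
    Tendsto (fun N : ℕ => ∏ i ∈ range (m N), (1 - (i : ℝ) / N)) atTop
      (𝓝 (exp (-c ^ 2 / 2))) := by
  have hmN := tendsto_div_natCast_of_tendsto_div_sqrt hm
  have hS : Tendsto (fun N : ℕ => ∑ i ∈ range (m N), (i : ℝ) / N) atTop (𝓝 (c ^ 2 / 2)) := by
    have h := ((hm.pow 2).sub hmN).div_const 2
    rw [sub_zero] at h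
    refine h.congr fun N => ?_
    have hgauss := sum_range_natCast_mul_two (m N)
    rw [div_pow, sq_sqrt (Nat.cast_nonneg _), ← sum_div,
      show ∑ i ∈ range (m N), (i : ℝ) = (m N : ℝ) * (m N - 1) / 2 by linarith]
    ring
  have hU : Tendsto (fun N : ℕ => ∑ i ∈ range (m N), ((i : ℝ) / N) ^ 2) atTop (𝓝 0) := by
    have h := hmN.mul (hm.pow 2)
    rw [zero_mul] at h
    refine squeeze_zero (fun N => sum_nonneg fun i _ => sq_nonneg _) (fun N => ?_) h
    calc ∑ i ∈ range (m N), ((i : ℝ) / N) ^ 2 ≤ ∑ i ∈ range (m N), ((m N : ℝ) / N) ^ 2 :=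
          sum_le_sum fun i hi => by gcongr; exact_mod_cast (mem_range.1 hi).le
      _ = (m N : ℝ) / N * ((m N : ℝ) / √N) ^ 2 := by
          rw [sum_const, card_range, nsmul_eq_mul, div_pow, div_pow, sq_sqrt (Nat.cast_nonneg _)]
          ring
  have hsmall : ∀ᶠ N : ℕ in atTop, ∀ i ∈ range (m N), (i : ℝ) / N ≤ 1 / 2 := by
    filter_upwards [hmN.eventually (ge_mem_nhds (by norm_num : (0 : ℝ) < 1 / 2))] with N hN i hi
    refine le_trans (div_le_div_of_nonneg_right ?_ (Nat.cast_nonneg _)) hN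
    exact_mod_cast (mem_range.1 hi).le
  have hlower := (hS.neg.sub (hU.const_mul 2)).rexp
  have hupper := hS.neg.rexp
  rw [mul_zero, sub_zero, ← neg_div] at hlower
  rw [← neg_div] at hupper
  exact tendsto_of_tendsto_of_tendsto_of_le_of_le' hlower hupper
    (hsmall.mono fun N hN => exp_neg_sum_sub_le_prod_one_sub _ hN)
    (hsmall.mono fun N hN => prod_one_sub_le_exp_neg_sum _ fun i hi =>
      (hN i hi).trans (by norm_num))

theorem core_size_limit_distribution (a b : ℝ) (ha : 0 < a) (hab : a < b) :
    Filter.Tendsto (fun n : ℕ =>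
        mapPr n (fun f => a * Real.sqrt n ≤ (Set.ncard {x | inCore f x} : ℝ) ∧
          (Set.ncard {x | inCore f x} : ℝ) ≤ b * Real.sqrt n))
      Filter.atTop
      (nhds (Real.exp (-(a ^ 2) / 2) - Real.exp (-(b ^ 2) / 2))) := by
  have hb : 0 < b := ha.trans hab
  have hk : Tendsto (fun N : ℕ => ((⌈a * √N⌉₊ : ℕ) : ℝ) / √N) atTop (𝓝 a) :=
    tendsto_div_sqrt_of_abs_sub_le fun N => abs_sub_le_iff.2
      ⟨by linarith [Nat.ceil_lt_add_one (by positivity : 0 ≤ a * √N)],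
        by linarith [Nat.le_ceil (a * √N)]⟩
  have hl : Tendsto (fun N : ℕ => ((⌊b * √N⌋₊ + 1 : ℕ) : ℝ) / √N) atTop (𝓝 b) :=
    tendsto_div_sqrt_of_abs_sub_le fun N => abs_sub_le_iff.2
      ⟨by push_cast; linarith [Nat.floor_le (by positivity : 0 ≤ b * √N)],
        by push_cast; linarith [Nat.lt_floor_add_one (b * √N)]⟩
  have hlN : ∀ᶠ N : ℕ in atTop, ⌊b * √N⌋₊ + 1 ≤ N := by
    filter_upwards [(tendsto_div_natCast_of_tendsto_div_sqrt hl).eventually (gt_mem_nhds one_pos),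
      eventually_gt_atTop 0] with N hlt hN
    exact_mod_cast ((div_lt_one (Nat.cast_pos.2 hN)).1 hlt).le
  refine ((tendsto_prod_range_one_sub_div hk).sub (tendsto_prod_range_one_sub_div hl)).congr' ?_
  filter_upwards [hlN] with N hN
  exact (mapPr_ncard_core_mem_Icc (by positivity) (by gcongr) hN).symm
end

section
/- Let 1 ≤ k < n, S = {1,…,k}, S^c = {k+1,…,n}. Let F be a uniformly random function from {1,…,n} to {1,…,n} conditioned on F(S) ⊆ S^c, and let Ñ be the number of x ∈ S^c such that x ∉ F(S) and F(x) ∉ S. Then for all s ≥ 0, P(Ñ > (1+s)·E[Ñ]) ≤ exp(−s²·E[Ñ]/(2+s)). -/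
open scoped Classical

/-- `NSfun n k f` : the number of vertices `x ∈ Sᶜ` not adjacent to any vertex of
`S = {x | (x : ℕ) < k}` in the undirected functional graph of `f`. -/
noncomputable def NSfun (n k : ℕ) (f : Fin n → Fin n) : ℕ :=
  Set.ncard {x : Fin n | k ≤ (x : ℕ) ∧ k ≤ (f x : ℕ) ∧
    ∀ s : Fin n, (s : ℕ) < k → f s ≠ x}

/-- The finite set of functions `f : Fin n → Fin n` with `f(S) ⊆ Sᶜ`,
where `S = {x | (x : ℕ) < k}`. -/
noncomputable def condMaps (n k : ℕ) : Finset (Fin n → Fin n) :=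
  Finset.univ.filter (fun f => ∀ x : Fin n, (x : ℕ) < k → k ≤ (f x : ℕ))

/-- Probability of an event under the uniform distribution on `condMaps n k`. -/
noncomputable def condPr (n k : ℕ) (P : (Fin n → Fin n) → Prop) : ℝ :=
  (((condMaps n k).filter P).card : ℝ) / (condMaps n k).card

/-- Expectation of `NSfun n k` under the uniform distribution on `condMaps n k`. -/
noncomputable def condEN (n k : ℕ) : ℝ :=
  (∑ f ∈ condMaps n k, (NSfun n k f : ℝ)) / (condMaps n k).card

/-!
Write `m = n - k`. For `A ⊆ Sᶜ` with `|A| = a`, the maps under which every `x ∈ A` is isolated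
from `S` are those sending `S` into `Sᶜ \ A` and `A` into `Sᶜ`, so this event has probability
`(1 - a/m)^k (m/n)^a`, which by Bernoulli's inequality is at most the product of the
probabilities of its single-vertex events. This negative cylinder dependence is all that
Chernoff's argument needs: expanding `e^{tÑ} = ∏ₓ (1 + (e^t - 1) 𝟙ₓ)` over subsets gives
`E e^{tÑ} ≤ ∏ₓ (1 + (e^t - 1) pₓ) ≤ exp ((e^t - 1) E Ñ)`, and Markov's inequality at
`t = log (1 + s)` together with `log (1 + s) ≥ 2s/(2 + s)` yields the bound.
-/

open Finset Real

noncomputable def uniformProb {α : Type*} (Ω : Finset α) (P : α → Prop) : ℝ :=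
  (#(Ω.filter P) : ℝ) / #Ω

section Chernoff

variable {α ι : Type*} (Ω : Finset α) (U : Finset ι) (E : α → ι → Prop)

lemma uniformProb_nonneg (P : α → Prop) : 0 ≤ uniformProb Ω P := by
  unfold uniformProb; positivity

lemma exp_mul_card_filter (t : ℝ) (p : ι → Prop) :
    exp (t * #(U.filter p)) =
      ∑ A ∈ U.powerset, (exp t - 1) ^ #A * if ∀ x ∈ A, p x then 1 else 0 := by
  have hterm : ∀ x ∈ U, exp (t * if p x then 1 else 0) =
      1 + (exp t - 1) * if p x then 1 else 0 := by
    intro x _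
    split_ifs <;> simp
  rw [natCast_card_filter, mul_sum, exp_sum, prod_congr rfl hterm, prod_one_add]
  refine sum_congr rfl fun A _ => ?_
  rw [prod_mul_distrib, prod_const, prod_boole]

lemma sum_exp_mul_card_filter_div (t : ℝ) :
    (∑ ω ∈ Ω, exp (t * #(U.filter (E ω)))) / #Ω =
      ∑ A ∈ U.powerset, (exp t - 1) ^ #A * uniformProb Ω (fun ω => ∀ x ∈ A, E ω x) := by
  simp_rw [exp_mul_card_filter, uniformProb, natCast_card_filter]
  rw [sum_comm, sum_div]
  refine sum_congr rfl fun A _ => ?_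
  rw [← mul_sum, mul_div_assoc]
  congr!

lemma sum_card_filter_div :
    (∑ ω ∈ Ω, (#(U.filter (E ω)) : ℝ)) / #Ω = ∑ x ∈ U, uniformProb Ω (E · x) := by
  simp only [uniformProb, natCast_card_filter, ← sum_div]
  rw [sum_comm]

variable {Ω U E}

lemma sum_exp_mul_card_filter_div_le
    (hneg : ∀ A ⊆ U, uniformProb Ω (fun ω => ∀ x ∈ A, E ω x) ≤
      ∏ x ∈ A, uniformProb Ω (E · x))
    {t : ℝ} (ht : 0 ≤ t) :
    (∑ ω ∈ Ω, exp (t * #(U.filter (E ω)))) / #Ω ≤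
      exp ((exp t - 1) * ∑ x ∈ U, uniformProb Ω (E · x)) := by
  have hc : 0 ≤ exp t - 1 := by linarith [one_le_exp ht]
  calc (∑ ω ∈ Ω, exp (t * #(U.filter (E ω)))) / #Ω
      ≤ ∑ A ∈ U.powerset, (exp t - 1) ^ #A * ∏ x ∈ A, uniformProb Ω (E · x) := by
        rw [sum_exp_mul_card_filter_div]
        gcongr with A hA
        exact hneg A (mem_powerset.1 hA)
    _ = ∏ x ∈ U, (1 + (exp t - 1) * uniformProb Ω (E · x)) := by
        rw [prod_one_add]
        simp only [prod_mul_distrib, prod_const]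
    _ ≤ ∏ x ∈ U, exp ((exp t - 1) * uniformProb Ω (E · x)) := by
        refine prod_le_prod (fun x _ => ?_) (fun x _ => ?_)
        · have := uniformProb_nonneg Ω (E · x)
          positivity
        · rw [add_comm]
          exact add_one_le_exp _
    _ = exp ((exp t - 1) * ∑ x ∈ U, uniformProb Ω (E · x)) := by
        rw [← exp_sum, mul_sum]

lemma uniformProb_lt_le_exp_mul (X : α → ℝ) (a : ℝ) {t : ℝ} (ht : 0 ≤ t) :
    uniformProb Ω (fun ω => a < X ω) ≤ exp (-(t * a)) * ((∑ ω ∈ Ω, exp (t * X ω)) / #Ω) := by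
  have hcard : (#(Ω.filter fun ω => a < X ω) : ℝ) ≤ exp (-(t * a)) * ∑ ω ∈ Ω, exp (t * X ω) :=
    calc (#(Ω.filter fun ω => a < X ω) : ℝ)
        = ∑ _ω ∈ Ω.filter fun ω => a < X ω, exp (-(t * a)) * exp (t * a) := by
          simp [← exp_add]
      _ ≤ ∑ ω ∈ Ω.filter fun ω => a < X ω, exp (-(t * a)) * exp (t * X ω) := by
        gcongr with ω hω
        exact (mem_filter.1 hω).2.le
      _ ≤ exp (-(t * a)) * ∑ ω ∈ Ω, exp (t * X ω) := by
        rw [← mul_sum]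
        gcongr
        exact filter_subset _ Ω
  rw [uniformProb, ← mul_div_assoc]
  gcongr

lemma sq_div_two_add_le_one_add_mul_log_one_add_sub {s : ℝ} (hs : 0 ≤ s) :
    s ^ 2 / (2 + s) ≤ (1 + s) * log (1 + s) - s :=
  calc s ^ 2 / (2 + s) = (1 + s) * (2 * s / (s + 2)) - s := by field_simp; ring
    _ ≤ (1 + s) * log (1 + s) - s := by gcongr; exact le_log_one_add_of_nonneg hs

theorem uniformProb_card_filter_gt_le
    (hneg : ∀ A ⊆ U, uniformProb Ω (fun ω => ∀ x ∈ A, E ω x) ≤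
      ∏ x ∈ A, uniformProb Ω (E · x))
    {s : ℝ} (hs : 0 ≤ s) :
    uniformProb Ω (fun ω => (#(U.filter (E ω)) : ℝ) >
        (1 + s) * ((∑ ω ∈ Ω, (#(U.filter (E ω)) : ℝ)) / #Ω)) ≤
      exp (-(s ^ 2 * ((∑ ω ∈ Ω, (#(U.filter (E ω)) : ℝ)) / #Ω) / (2 + s))) := by
  rw [sum_card_filter_div]
  set μ := ∑ x ∈ U, uniformProb Ω (E · x)
  have hμ : 0 ≤ μ := sum_nonneg fun x _ => uniformProb_nonneg Ω _
  have ht : 0 ≤ log (1 + s) := log_nonneg (by linarith)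
  calc _ ≤ exp (-(log (1 + s) * ((1 + s) * μ))) *
          ((∑ ω ∈ Ω, exp (log (1 + s) * #(U.filter (E ω)))) / #Ω) :=
        uniformProb_lt_le_exp_mul _ _ ht
    _ ≤ exp (-(log (1 + s) * ((1 + s) * μ))) * exp ((exp (log (1 + s)) - 1) * μ) := by
        gcongr
        exact sum_exp_mul_card_filter_div_le hneg ht
    _ = exp (-(((1 + s) * log (1 + s) - s) * μ)) := by
        rw [exp_log (by linarith), ← exp_add]
        ring_nf
    _ ≤ exp (-(s ^ 2 * μ / (2 + s))) := by
        rw [mul_div_right_comm]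
        gcongr
        exact sq_div_two_add_le_one_add_mul_log_one_add_sub hs

end Chernoff

section ConditionedMaps

variable {n k : ℕ}

def sCompl (n k : ℕ) : Finset (Fin n) := univ.filter fun x => k ≤ (x : ℕ)

def IsolatedFromS (k : ℕ) {n : ℕ} (f : Fin n → Fin n) (x : Fin n) : Prop :=
  k ≤ (f x : ℕ) ∧ ∀ s : Fin n, (s : ℕ) < k → f s ≠ x

lemma NSfun_eq_card_filter (f : Fin n → Fin n) :
    NSfun n k f = #((sCompl n k).filter (IsolatedFromS k f)) := by
  rw [NSfun, ← Set.ncard_coe_finset]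
  congr 1
  ext x
  simp [sCompl, IsolatedFromS]

lemma filter_not_lt_eq_sCompl :
    (univ.filter fun x : Fin n => ¬ (x : ℕ) < k) = sCompl n k := by
  simp only [sCompl, not_lt]

lemma card_sCompl : #(sCompl n k) = n - k := by
  have h := card_filter_add_card_filter_not (s := (univ : Finset (Fin n))) (fun x => (x : ℕ) < k)
  rw [filter_not_lt_eq_sCompl, Fin.card_filter_val_lt, card_univ, Fintype.card_fin] at h
  omega

lemma condMaps_filter_isolated {A : Finset (Fin n)} (hA : A ⊆ sCompl n k) :
    (condMaps n k).filter (fun f => ∀ x ∈ A, IsolatedFromS k f x) =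
      Fintype.piFinset fun i : Fin n =>
        if (i : ℕ) < k then sCompl n k \ A else if i ∈ A then sCompl n k else univ := by
  have hAk : ∀ x ∈ A, k ≤ (x : ℕ) := fun x hx => (mem_filter.1 (hA hx)).2
  ext f
  rw [mem_filter, condMaps, mem_filter, Fintype.mem_piFinset]
  simp only [IsolatedFromS, mem_univ, true_and]
  constructor
  · rintro ⟨hS, hAiso⟩ i
    split_ifs with hi hiA
    · exact mem_sdiff.2 ⟨by simpa [sCompl] using hS i hi, fun hfi => (hAiso _ hfi).2 i hi rfl⟩
    · simpa [sCompl] using (hAiso i hiA).1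
    · exact mem_univ _
  · intro h
    refine ⟨fun i hi => ?_, fun x hx => ⟨?_, fun s hs hsx => ?_⟩⟩
    · have hfi := h i
      rw [if_pos hi] at hfi
      exact (mem_filter.1 (mem_sdiff.1 hfi).1).2
    · have hfx := h x
      rw [if_neg (hAk x hx).not_gt, if_pos hx] at hfx
      exact (mem_filter.1 hfx).2
    · have hfs := h s
      rw [if_pos hs, hsx] at hfs
      exact (mem_sdiff.1 hfs).2 hx

lemma card_condMaps_filter_isolated (hkn : k ≤ n) {A : Finset (Fin n)} (hA : A ⊆ sCompl n k) :
    #((condMaps n k).filter fun f => ∀ x ∈ A, IsolatedFromS k f x) =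
      (n - k - #A) ^ k * (n - k) ^ #A * n ^ (n - k - #A) := by
  have hS : #(univ.filter fun i : Fin n => (i : ℕ) < k) = k := by
    rw [Fin.card_filter_val_lt]
    omega
  have hInA : (sCompl n k).filter (· ∈ A) = A := by
    rw [filter_mem_eq_inter, inter_eq_right.2 hA]
  have hNotInA : (sCompl n k).filter (· ∉ A) = sCompl n k \ A := (sdiff_eq_filter _ _).symm
  rw [condMaps_filter_isolated hA, Fintype.card_piFinset]
  simp only [apply_ite card]
  rw [prod_ite, prod_const, hS, filter_not_lt_eq_sCompl, prod_ite, prod_const, prod_const,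
    hInA, hNotInA, card_sdiff_of_subset hA, card_sCompl, card_univ, Fintype.card_fin]
  ring

lemma card_condMaps (hkn : k ≤ n) : #(condMaps n k) = (n - k) ^ k * n ^ (n - k) := by
  simpa using card_condMaps_filter_isolated hkn (empty_subset (sCompl n k))

lemma uniformProb_isolated (hkn : k < n) {A : Finset (Fin n)} (hA : A ⊆ sCompl n k) :
    uniformProb (condMaps n k) (fun f => ∀ x ∈ A, IsolatedFromS k f x) =
      (1 - #A / (n - k : ℕ)) ^ k * ((n - k : ℕ) / n) ^ #A := by
  have hAm : #A ≤ n - k := card_sCompl (n := n) (k := k) ▸ card_le_card hA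
  obtain ⟨c, hc⟩ : ∃ c, n - k = c + #A := ⟨n - k - #A, by omega⟩
  have hm : ((c + #A : ℕ) : ℝ) ≠ 0 := by rw [← hc]; exact_mod_cast (Nat.sub_pos_of_lt hkn).ne'
  have hn : (n : ℝ) ≠ 0 := by exact_mod_cast (Nat.zero_lt_of_lt hkn).ne'
  -- `uniformProb` filters with the classical instance; `filter_congr_decidable` switches it.
  rw [uniformProb, filter_congr_decidable, card_condMaps_filter_isolated hkn.le hA,
    card_condMaps hkn.le, hc, Nat.add_sub_cancel]
  push_cast at hm ⊢
  rw [one_sub_div hm, add_sub_cancel_right, div_pow, div_pow, pow_add]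
  field_simp

lemma uniformProb_isolated_le_prod (hkn : k < n) {A : Finset (Fin n)} (hA : A ⊆ sCompl n k) :
    uniformProb (condMaps n k) (fun f => ∀ x ∈ A, IsolatedFromS k f x) ≤
      ∏ x ∈ A, uniformProb (condMaps n k) (fun f => IsolatedFromS k f x) := by
  set m : ℝ := ((n - k : ℕ) : ℝ)
  have hm : 1 ≤ m := by unfold m; exact_mod_cast Nat.sub_pos_of_lt hkn
  have hAm : (#A : ℝ) ≤ m := by
    unfold m; exact_mod_cast card_sCompl (n := n) (k := k) ▸ card_le_card hA
  have hsingle : ∀ x ∈ A, uniformProb (condMaps n k) (fun f => IsolatedFromS k f x) =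
      (1 - 1 / m) ^ k * (m / n) := by
    intro x hx
    simpa using uniformProb_isolated hkn (singleton_subset_iff.2 (hA hx))
  have hbernoulli : 1 - #A / m ≤ (1 - 1 / m) ^ #A := by
    have h := one_add_mul_le_pow (a := -(1 / m))
      (by linarith [one_div_le_one_div_of_le one_pos hm]) #A
    rwa [mul_neg, mul_one_div, ← sub_eq_add_neg, ← sub_eq_add_neg] at h
  rw [prod_congr rfl hsingle, prod_const, uniformProb_isolated hkn hA, mul_pow, ← pow_mul,
    mul_comm k, pow_mul]
  gcongr
  rw [sub_nonneg, div_le_one (by linarith)]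
  exact hAm

end ConditionedMaps

theorem mapping_concentration_upper_tail_general (n k : ℕ) (hkn : k < n)
    (s : ℝ) (hs : 0 ≤ s) :
    condPr n k (fun f => (NSfun n k f : ℝ) > (1 + s) * condEN n k) ≤
      Real.exp (-(s ^ 2 * condEN n k / (2 + s))) := by
  change uniformProb (condMaps n k) _ ≤ _
  simp only [condEN, NSfun_eq_card_filter]
  exact uniformProb_card_filter_gt_le (fun A hA => uniformProb_isolated_le_prod hkn hA) hs

theorem mapping_concentration_upper_tail (n k : ℕ) (hk : 1 ≤ k) (hkn : k < n)
    (s : ℝ) (hs : 0 ≤ s) :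
    condPr n k (fun f => (NSfun n k f : ℝ) > (1 + s) * condEN n k) ≤
      Real.exp (-(s ^ 2 * condEN n k / (2 + s))) :=
  mapping_concentration_upper_tail_general n k hkn s hs
end
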